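/- arXiv:1105.6212 — 9 statements merged into one kernel-verified Lean document; each statement's English description precedes it below -/
import Mathlib

section
/- Let m ≥ 2 and let A₁, A₂, …, A_m be orthogonal projectors on ℂ^N (i.e., A_j² = A_j and A_j* = A_j for each j). Then ‖A₁ + A₂ + … + A_m‖ ≤ 1 + (m−1) · max_{1 ≤ j < k ≤ m} ‖A_j A_k‖. -/
/-!
Let `Pⱼ` be the projections and, for a vector `x`, put `y = ∑ⱼ Pⱼ x` and `Λ = ∑ⱼ ‖Pⱼ x‖²`.
Since each `Pⱼ` is a self-adjoint idempotent, `Λ = re ⟪x, y⟫ ≤ ‖x‖ ‖y‖`. Expanding `‖y‖²`, each cross term satisfies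
`⟪Pⱼ x, Pₖ x⟫ = ⟪Pⱼ x, Pⱼ Pₖ (Pₖ x)⟫`, hence is at most `C ‖Pⱼ x‖ ‖Pₖ x‖`, and Cauchy–Schwarz for
the vector `(‖Pⱼ x‖)ⱼ` bounds their sum by `(m - 1) C Λ`. So `‖y‖² ≤ (1 + (m - 1) C) Λ`, and
together with the first inequality `‖y‖ ≤ (1 + (m - 1) C) ‖x‖`.
-/

/-- The ℓ²→ℓ² operator norm of a square complex matrix,
i.e. `sup {‖Aψ‖ : ‖ψ‖ = 1}`. -/
noncomputable def matOpNorm {S : Type*} [Fintype S] [DecidableEq S]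
    (A : Matrix S S ℂ) : ℝ :=
  ‖Matrix.toEuclideanCLM (𝕜 := ℂ) A‖

open scoped InnerProductSpace
open Finset RCLike

theorem Finset.sum_sum_erase_mul_le {ι : Type*} [Fintype ι] [DecidableEq ι] (a : ι → ℝ) :
    ∑ j, ∑ k ∈ univ.erase j, a j * a k ≤ (Fintype.card ι - 1) * ∑ j, a j ^ 2 := by
  have h : ∑ j, ∑ k ∈ univ.erase j, a j * a k = (∑ j, a j) ^ 2 - ∑ j, a j ^ 2 := by
    simp only [sq, sum_mul_sum, ← sum_sub_distrib]
    refine sum_congr rfl fun j _ => ?_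
    rw [sum_erase_eq_sub (mem_univ j)]
  rw [h, sub_one_mul]
  gcongr
  simpa using sq_sum_le_card_mul_sum_sq (s := univ) (f := a)

theorem IsSelfAdjoint.norm_mul_comm {R : Type*} [NonUnitalNormedRing R] [StarRing R]
    [NormedStarGroup R] {a b : R} (ha : IsSelfAdjoint a) (hb : IsSelfAdjoint b) :
    ‖a * b‖ = ‖b * a‖ := by
  rw [← norm_star, star_mul, ha.star_eq, hb.star_eq]

section

variable {𝕜 E : Type*} [RCLike 𝕜] [NormedAddCommGroup E] [InnerProductSpace 𝕜 E]
  [CompleteSpace E]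

namespace IsStarProjection

variable {P Q : E →L[𝕜] E}

theorem inner_apply_left (hP : IsStarProjection P) (x y : E) : ⟪P x, y⟫_𝕜 = ⟪x, P y⟫_𝕜 :=
  hP.isSelfAdjoint.isSymmetric x y

theorem apply_apply (hP : IsStarProjection P) (x : E) : P (P x) = P x :=
  congr($(hP.isIdempotentElem.eq) x)

theorem re_inner_apply_self (hP : IsStarProjection P) (x : E) :
    re ⟪x, P x⟫_𝕜 = ‖P x‖ ^ 2 := by
  rw [← hP.apply_apply, ← hP.inner_apply_left, hP.apply_apply, inner_self_eq_norm_sq]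

theorem re_inner_apply_apply_le (hP : IsStarProjection P) (hQ : IsStarProjection Q) (x : E) :
    re ⟪P x, Q x⟫_𝕜 ≤ ‖P * Q‖ * (‖P x‖ * ‖Q x‖) := by
  have h : ⟪P x, Q x⟫_𝕜 = ⟪P x, (P * Q) (Q x)⟫_𝕜 := by
    rw [mul_apply_eq_comp, hQ.apply_apply, ← hP.inner_apply_left, hP.apply_apply]
  calc re ⟪P x, Q x⟫_𝕜 ≤ ‖⟪P x, (P * Q) (Q x)⟫_𝕜‖ := h ▸ re_le_norm _
    _ ≤ ‖P x‖ * (‖P * Q‖ * ‖Q x‖) :=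
      (norm_inner_le_norm _ _).trans (by gcongr; exact (P * Q).le_opNorm _)
    _ = ‖P * Q‖ * (‖P x‖ * ‖Q x‖) := by ring

end IsStarProjection

variable {ι : Type*} [Fintype ι] {P : ι → E →L[𝕜] E} {C : ℝ}

theorem sum_norm_apply_sq_eq_re_inner (hP : ∀ j, IsStarProjection (P j)) (x : E) :
    ∑ j, ‖P j x‖ ^ 2 = re ⟪x, ∑ j, P j x⟫_𝕜 := by
  simp only [inner_sum, map_sum, (hP _).re_inner_apply_self]

theorem norm_sum_apply_sq_le (hP : ∀ j, IsStarProjection (P j))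
    (hC : ∀ j k, j ≠ k → ‖P j * P k‖ ≤ C) (hC0 : 0 ≤ C) (x : E) :
    ‖∑ j, P j x‖ ^ 2 ≤ (1 + (Fintype.card ι - 1) * C) * ∑ j, ‖P j x‖ ^ 2 := by
  classical
  have hcross : ∀ j, ∑ k ∈ univ.erase j, re ⟪P j x, P k x⟫_𝕜
      ≤ C * ∑ k ∈ univ.erase j, ‖P j x‖ * ‖P k x‖ := by
    intro j
    rw [mul_sum]
    refine sum_le_sum fun k hk => ?_
    refine ((hP j).re_inner_apply_apply_le (hP k) x).trans ?_
    gcongr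
    exact hC j k (ne_of_mem_erase hk).symm
  calc ‖∑ j, P j x‖ ^ 2 = ∑ j, ∑ k, re ⟪P j x, P k x⟫_𝕜 := by
        rw [← inner_self_eq_norm_sq (𝕜 := 𝕜), sum_inner, map_sum]
        simp only [inner_sum, map_sum]
    _ = ∑ j, ‖P j x‖ ^ 2 + ∑ j, ∑ k ∈ univ.erase j, re ⟪P j x, P k x⟫_𝕜 := by
        rw [← sum_add_distrib]
        refine sum_congr rfl fun j _ => ?_
        rw [← add_sum_erase _ _ (mem_univ j), inner_self_eq_norm_sq]
    _ ≤ ∑ j, ‖P j x‖ ^ 2 + C * ∑ j, ∑ k ∈ univ.erase j, ‖P j x‖ * ‖P k x‖ := by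
        rw [mul_sum]; gcongr with j; exact hcross j
    _ ≤ ∑ j, ‖P j x‖ ^ 2 + C * ((Fintype.card ι - 1) * ∑ j, ‖P j x‖ ^ 2) := by
        gcongr; exact sum_sum_erase_mul_le _
    _ = (1 + (Fintype.card ι - 1) * C) * ∑ j, ‖P j x‖ ^ 2 := by ring

theorem norm_sum_le_of_norm_mul_le [Nonempty ι] (hP : ∀ j, IsStarProjection (P j))
    (hC : ∀ j k, j ≠ k → ‖P j * P k‖ ≤ C) (hC0 : 0 ≤ C) :
    ‖∑ j, P j‖ ≤ 1 + (Fintype.card ι - 1) * C := by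
  have hK : 0 ≤ 1 + (Fintype.card ι - 1) * C := by
    have : (1 : ℝ) ≤ Fintype.card ι := by exact_mod_cast Fintype.card_pos
    positivity
  refine ContinuousLinearMap.opNorm_le_bound _ hK fun x => ?_
  rw [_root_.sum_apply]
  have hsum : ∑ j, ‖P j x‖ ^ 2 ≤ ‖x‖ * ‖∑ j, P j x‖ := by
    rw [sum_norm_apply_sq_eq_re_inner hP]
    exact (re_le_norm _).trans (norm_inner_le_norm _ _)
  have hsq := (norm_sum_apply_sq_le hP hC hC0 x).trans (mul_le_mul_of_nonneg_left hsum hK)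
  rcases (norm_nonneg (∑ j, P j x)).eq_or_lt with hzero | hpos
  · rw [← hzero]; positivity
  · exact le_of_mul_le_mul_right (by linarith) hpos

end

/-- For orthogonal projectors `A 1, …, A m` (m ≥ 2) on ℂ^N,
`‖A 1 + … + A m‖ ≤ 1 + (m-1) · max_{j<k} ‖A j * A k‖`
(stated with an arbitrary upper bound `C` on the pairwise norms). -/
theorem stmt1 {N m : ℕ} (hm : 2 ≤ m) (A : Fin m → Matrix (Fin N) (Fin N) ℂ)
    (hidem : ∀ j, A j * A j = A j) (hherm : ∀ j, (A j).IsHermitian)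
    (C : ℝ) (hC : ∀ j k : Fin m, j < k → matOpNorm (A j * A k) ≤ C) :
    matOpNorm (∑ j, A j) ≤ 1 + ((m : ℝ) - 1) * C := by
  set P := fun j => Matrix.toEuclideanCLM (𝕜 := ℂ) (A j)
  have hP : ∀ j, IsStarProjection (P j) := fun j =>
    IsStarProjection.map ⟨hidem j, (hherm j).isSelfAdjoint⟩ _
  have hPC : ∀ j k, j ≠ k → ‖P j * P k‖ ≤ C := by
    intro j k hjk
    rcases hjk.lt_or_gt with h | h
    · simpa [P, matOpNorm] using hC j k h
    · rw [(hP j).isSelfAdjoint.norm_mul_comm (hP k).isSelfAdjoint]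
      simpa [P, matOpNorm] using hC k j h
  have hC0 : 0 ≤ C :=
    (norm_nonneg _).trans (hC ⟨0, by omega⟩ ⟨1, by omega⟩ (by simp [Fin.lt_def]))
  have : Nonempty (Fin m) := ⟨⟨0, by omega⟩⟩
  simpa [matOpNorm, P, map_sum] using norm_sum_le_of_norm_mul_le hP hPC hC0
end

section
/- Let {|x⟩_j : x ∈ S} and {|y⟩_k : y ∈ S} be two orthonormal bases of ℂ^N (indexed by a finite set S of size N) such that |⟨x|_j |y⟩_k| ≤ c for all x, y ∈ S. For subsets L^j, L^k ⊆ S define the orthogonal projectors A^j := Σ_{x∈L^j} |x⟩_j⟨x|_j and A^k := Σ_{y∈L^k} |y⟩_k⟨y|_k. Then ‖A^j A^k‖ ≤ c · √(|L^j| · |L^k|). -/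
/-- The rank-one projector `|v⟩⟨v|` as a matrix. -/
noncomputable def outer {S : Type*} [Fintype S] (v : EuclideanSpace ℂ S) :
    Matrix S S ℂ :=
  Matrix.of fun a b => v a * star (v b)

open Finset InnerProductSpace

lemma toEuclideanCLM_outer {S : Type*} [Fintype S] [DecidableEq S] (v : EuclideanSpace ℂ S) :
    Matrix.toEuclideanCLM (𝕜 := ℂ) (outer v) = rankOne ℂ v v := by
  ext ψ a
  simp [outer, Matrix.mulVec, dotProduct, PiLp.inner_apply, mul_sum, mul_comm, mul_left_comm]

namespace Orthonormal

variable {𝕜 E ι κ : Type*} [RCLike 𝕜] [NormedAddCommGroup E] [InnerProductSpace 𝕜 E]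

theorem norm_sum_smul_sq {v : ι → E} (hv : Orthonormal 𝕜 v) (s : Finset ι) (a : ι → 𝕜) :
    ‖∑ i ∈ s, a i • v i‖ ^ 2 = ∑ i ∈ s, ‖a i‖ ^ 2 := by
  rw [@norm_sq_eq_re_inner 𝕜, hv.inner_sum, map_sum]
  refine sum_congr rfl fun i _ => ?_
  rw [RCLike.conj_mul, ← RCLike.ofReal_pow, RCLike.ofReal_re]

theorem norm_sum_smul_le {v : ι → E} (hv : Orthonormal 𝕜 v) {s : Finset ι} {a : ι → 𝕜} {M : ℝ}
    (ha : ∀ i ∈ s, ‖a i‖ ≤ M) :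
    ‖∑ i ∈ s, a i • v i‖ ≤ √(#s : ℝ) * M := by
  rcases s.eq_empty_or_nonempty with rfl | ⟨i, hi⟩
  · simp
  have hM : 0 ≤ M := (norm_nonneg _).trans (ha i hi)
  rw [← Real.sqrt_sq hM, ← Real.sqrt_mul' _ (sq_nonneg M)]
  refine Real.le_sqrt_of_sq_le ?_
  calc ‖∑ i ∈ s, a i • v i‖ ^ 2 = ∑ i ∈ s, ‖a i‖ ^ 2 := hv.norm_sum_smul_sq s a
    _ ≤ ∑ _i ∈ s, M ^ 2 := sum_le_sum fun i hi => pow_le_pow_left₀ (norm_nonneg _) (ha i hi) 2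
    _ = #s * M ^ 2 := by rw [sum_const, nsmul_eq_mul]

theorem sum_norm_inner_le {v : ι → E} (hv : Orthonormal 𝕜 v) (s : Finset ι) (x : E) :
    ∑ i ∈ s, ‖(inner 𝕜 (v i) x : 𝕜)‖ ≤ √(#s : ℝ) * ‖x‖ := by
  rw [← Real.sqrt_sq (norm_nonneg x), ← Real.sqrt_mul' _ (sq_nonneg _)]
  refine Real.le_sqrt_of_sq_le ?_
  calc (∑ i ∈ s, ‖(inner 𝕜 (v i) x : 𝕜)‖) ^ 2
      ≤ #s * ∑ i ∈ s, ‖(inner 𝕜 (v i) x : 𝕜)‖ ^ 2 := sq_sum_le_card_mul_sum_sq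
    _ ≤ #s * ‖x‖ ^ 2 := by gcongr; exact hv.sum_inner_products_le x

theorem norm_inner_sum_inner_smul_le {w : κ → E} (hw : Orthonormal 𝕜 w) {t : Finset κ} {u : E}
    {c : ℝ} (hc : ∀ j ∈ t, ‖(inner 𝕜 u (w j) : 𝕜)‖ ≤ c) (x : E) :
    ‖(inner 𝕜 u (∑ j ∈ t, (inner 𝕜 (w j) x : 𝕜) • w j) : 𝕜)‖ ≤ c * √(#t : ℝ) * ‖x‖ := by
  rcases t.eq_empty_or_nonempty with rfl | ⟨j, hj⟩
  · simp
  have hc0 : 0 ≤ c := (norm_nonneg _).trans (hc j hj)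
  calc _ = ‖∑ j ∈ t, (inner 𝕜 (w j) x : 𝕜) * inner 𝕜 u (w j)‖ := by
        simp only [inner_sum, inner_smul_right]
    _ ≤ ∑ j ∈ t, c * ‖(inner 𝕜 (w j) x : 𝕜)‖ := by
        refine (norm_sum_le _ _).trans (sum_le_sum fun j hj => ?_)
        rw [norm_mul, mul_comm]
        exact mul_le_mul_of_nonneg_right (hc j hj) (norm_nonneg _)
    _ ≤ c * (√(#t : ℝ) * ‖x‖) := by
        rw [← mul_sum]
        exact mul_le_mul_of_nonneg_left (hw.sum_norm_inner_le t x) hc0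
    _ = c * √(#t : ℝ) * ‖x‖ := (mul_assoc _ _ _).symm

theorem norm_sum_rankOne_comp_sum_rankOne_le {v : ι → E} {w : κ → E}
    (hv : Orthonormal 𝕜 v) (hw : Orthonormal 𝕜 w) (s : Finset ι) (t : Finset κ) {c : ℝ}
    (hc : ∀ i ∈ s, ∀ j ∈ t, ‖(inner 𝕜 (v i) (w j) : 𝕜)‖ ≤ c) :
    ‖(∑ i ∈ s, rankOne 𝕜 (v i) (v i)) ∘L (∑ j ∈ t, rankOne 𝕜 (w j) (w j))‖
      ≤ c * √((#s : ℝ) * #t) := by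
  rcases s.eq_empty_or_nonempty with rfl | ⟨i, hi⟩
  · simp
  rcases t.eq_empty_or_nonempty with rfl | ⟨j, hj⟩
  · simp
  have hc0 : 0 ≤ c := (norm_nonneg _).trans (hc i hi j hj)
  refine ContinuousLinearMap.opNorm_le_bound _ (by positivity) fun x => ?_
  calc _ = ‖∑ i ∈ s, (inner 𝕜 (v i) (∑ j ∈ t, (inner 𝕜 (w j) x : 𝕜) • w j) : 𝕜) • v i‖ := by
        simp only [ContinuousLinearMap.comp_apply, _root_.sum_apply, rankOne_apply]
    _ ≤ √(#s : ℝ) * (c * √(#t : ℝ) * ‖x‖) :=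
        hv.norm_sum_smul_le fun i hi => hw.norm_inner_sum_inner_smul_le (hc i hi) x
    _ = c * √((#s : ℝ) * #t) * ‖x‖ := by rw [Real.sqrt_mul (Nat.cast_nonneg _)]; ring

end Orthonormal

/-- If two orthonormal bases of ℂ^S have pairwise overlaps at most `c`, then the
product of the projectors onto spans of sub-families `L1`, `L2` has operator
norm at most `c·√(|L1|·|L2|)`. -/
theorem stmt2 {S : Type*} [Fintype S] [DecidableEq S]
    (b1 b2 : OrthonormalBasis S ℂ (EuclideanSpace ℂ S))
    (c : ℝ) (hc : ∀ x y : S, ‖(inner ℂ (b1 x) (b2 y) : ℂ)‖ ≤ c)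
    (L1 L2 : Finset S) :
    matOpNorm ((∑ x ∈ L1, outer (b1 x)) * (∑ y ∈ L2, outer (b2 y)))
      ≤ c * Real.sqrt ((L1.card : ℝ) * (L2.card : ℝ)) := by
  rw [matOpNorm, map_mul, map_sum, map_sum]
  simp only [toEuclideanCLM_outer]
  exact b1.orthonormal.norm_sum_rankOne_comp_sum_rankOne_le b2.orthonormal L1 L2
    fun x _ y _ => hc x y
end

section
/- Let ρ be an arbitrary density matrix on the 2ⁿ-dimensional Hilbert space of n qubits. For j ∈ {1,…,m}, let Q^j(·) be the outcome distribution when ρ is measured in the basis B_j, i.e., Q^j(x) = ⟨x|_j ρ |x⟩_j for x ∈ {0,1}ⁿ. Then, for any family {L^j}_{j∈{1,…,m}} of subsets L^j ⊆ {0,1}ⁿ, it holds that Σ_{j=1}^m Q^j(L^j) ≤ 1 + c·(m−1)·max_{j≠k} √(|L^j|·|L^k|), where Q^j(L^j) := Σ_{x∈L^j} Q^j(x). -/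
/-!
Writing `ρ = ∑ᵢ pᵢ |uᵢ⟩⟨uᵢ|` with `∑ᵢ pᵢ = 1`, it suffices to treat a unit vector `ψ`.
Let `φⱼ` be the orthogonal projection of `ψ` onto the span of `{|x⟩ⱼ : x ∈ Lʲ}`, so that
`Qʲ(Lʲ) = ‖φⱼ‖²` and `t := ∑ⱼ ‖φⱼ‖² = re ⟪ψ, ∑ⱼ φⱼ⟫ ≤ ‖∑ⱼ φⱼ‖`. Expanding `φⱼ` and `φₖ` in their
bases and applying Cauchy–Schwarz gives `|⟪φⱼ, φₖ⟫| ≤ c √(|Lʲ| |Lᵏ|) ‖φⱼ‖ ‖φₖ‖ ≤ c M ‖φⱼ‖ ‖φₖ‖`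
for `j ≠ k`, hence `t² ≤ ‖∑ⱼ φⱼ‖² ≤ t + c M ((∑ⱼ ‖φⱼ‖)² - t) ≤ t (1 + c M (m - 1))`.
-/

open scoped ComplexOrder
/-- `outcomeProb B ρ j x = ⟨x|_j ρ |x⟩_j`, the probability of outcome `x` when the
`n`-qubit state `ρ` is measured in the basis `B j`. -/
noncomputable def outcomeProb {n m : ℕ}
    (B : Fin m → OrthonormalBasis (Fin n → Bool) ℂ (EuclideanSpace ℂ (Fin n → Bool)))
    (ρ : Matrix (Fin n → Bool) (Fin n → Bool) ℂ) (j : Fin m) (x : Fin n → Bool) : ℝ :=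
  (dotProduct (star (fun i => B j x i)) (ρ.mulVec (fun i => B j x i))).re

open scoped InnerProductSpace
open Matrix Finset

section

variable {𝕜 E : Type*} [RCLike 𝕜] [NormedAddCommGroup E] [InnerProductSpace 𝕜 E]

theorem Orthonormal.norm_sum_smul_sq_s3 {ι : Type*} {b : ι → E} (hb : Orthonormal 𝕜 b)
    (s : Finset ι) (α : ι → 𝕜) : ‖∑ x ∈ s, α x • b x‖ ^ 2 = ∑ x ∈ s, ‖α x‖ ^ 2 := by
  rw [← inner_self_eq_norm_sq (𝕜 := 𝕜), hb.inner_sum, map_sum]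
  simp only [RCLike.conj_mul, ← RCLike.ofReal_pow, RCLike.ofReal_re]

theorem Orthonormal.sum_norm_le_sqrt_card_mul_norm_sum {ι : Type*} {b : ι → E}
    (hb : Orthonormal 𝕜 b) (s : Finset ι) (α : ι → 𝕜) :
    ∑ x ∈ s, ‖α x‖ ≤ √(#s : ℝ) * ‖∑ x ∈ s, α x • b x‖ := by
  simpa [← hb.norm_sum_smul_sq_s3, Real.sqrt_sq (norm_nonneg _)] using
    Real.sum_mul_le_sqrt_mul_sqrt s (fun _ => 1) (fun x => ‖α x‖)

theorem re_inner_sum_inner_smul {ι : Type*} (b : ι → E) (s : Finset ι) (ψ : E) :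
    RCLike.re ⟪ψ, ∑ x ∈ s, ⟪b x, ψ⟫_𝕜 • b x⟫_𝕜 = ∑ x ∈ s, ‖⟪b x, ψ⟫_𝕜‖ ^ 2 := by
  rw [inner_sum, map_sum]
  refine sum_congr rfl fun x _ => ?_
  rw [inner_smul_right, ← inner_conj_symm ψ (b x), RCLike.mul_conj, ← RCLike.ofReal_pow,
    RCLike.ofReal_re]

theorem norm_inner_sum_smul_sum_smul_le {ι ι' : Type*} {u : ι → E} {w : ι' → E} {c : ℝ}
    (hc : ∀ x y, ‖⟪u x, w y⟫_𝕜‖ ≤ c) (s : Finset ι) (s' : Finset ι') (α : ι → 𝕜) (β : ι' → 𝕜) :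
    ‖⟪∑ x ∈ s, α x • u x, ∑ y ∈ s', β y • w y⟫_𝕜‖ ≤
      c * (∑ x ∈ s, ‖α x‖) * ∑ y ∈ s', ‖β y‖ := by
  calc ‖⟪∑ x ∈ s, α x • u x, ∑ y ∈ s', β y • w y⟫_𝕜‖
      = ‖∑ x ∈ s, ∑ y ∈ s', starRingEnd 𝕜 (α x) * β y * ⟪u x, w y⟫_𝕜‖ := by
        rw [sum_inner]
        refine congrArg _ <| sum_congr rfl fun x _ => ?_
        rw [inner_smul_left, inner_sum, mul_sum]
        exact sum_congr rfl fun y _ => by rw [inner_smul_right, mul_assoc]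
    _ ≤ ∑ x ∈ s, ∑ y ∈ s', ‖α x‖ * ‖β y‖ * c := by
        refine (norm_sum_le _ _).trans <| sum_le_sum fun x _ => (norm_sum_le _ _).trans <|
          sum_le_sum fun y _ => ?_
        rw [norm_mul, norm_mul, RCLike.norm_conj]
        gcongr
        exact hc x y
    _ = c * (∑ x ∈ s, ‖α x‖) * ∑ y ∈ s', ‖β y‖ := by
        rw [mul_assoc, sum_mul_sum, mul_sum]
        exact sum_congr rfl fun x _ => by rw [mul_sum]; exact sum_congr rfl fun y _ => by ring

theorem norm_sum_sq_le_of_norm_inner_le {κ : Type*} [Fintype κ] (φ : κ → E) {K : ℝ}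
    (hK0 : 0 ≤ K) (hK : ∀ j k, j ≠ k → ‖⟪φ j, φ k⟫_𝕜‖ ≤ K * (‖φ j‖ * ‖φ k‖)) :
    ‖∑ j, φ j‖ ^ 2 ≤ (∑ j, ‖φ j‖ ^ 2) * (1 + K * (Fintype.card κ - 1)) := by
  classical
  set t := ∑ j, ‖φ j‖ ^ 2
  calc ‖∑ j, φ j‖ ^ 2 = ∑ j, ∑ k, RCLike.re ⟪φ j, φ k⟫_𝕜 := by
        rw [← inner_self_eq_norm_sq (𝕜 := 𝕜), sum_inner, map_sum]
        simp only [inner_sum, map_sum]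
    _ ≤ ∑ j, ∑ k, (K * (‖φ j‖ * ‖φ k‖) + if j = k then (1 - K) * ‖φ j‖ ^ 2 else 0) := by
        refine sum_le_sum fun j _ => sum_le_sum fun k _ => ?_
        by_cases hjk : j = k
        · subst hjk
          rw [if_pos rfl, inner_self_eq_norm_sq]
          exact le_of_eq (by ring)
        · rw [if_neg hjk, add_zero]
          exact (RCLike.re_le_norm _).trans (hK j k hjk)
    _ = K * (∑ j, ‖φ j‖) ^ 2 + (1 - K) * t := by
        simp only [sum_add_distrib, sum_ite_eq, mem_univ, if_true, ← mul_sum, sq, sum_mul_sum, t]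
    _ ≤ K * (Fintype.card κ * t) + (1 - K) * t := by
        gcongr
        simpa using sq_sum_le_card_mul_sum_sq (s := univ) (f := fun j => ‖φ j‖)
    _ = t * (1 + K * (Fintype.card κ - 1)) := by ring

theorem sum_norm_sq_le_of_norm_inner_le {κ : Type*} [Fintype κ] [Nonempty κ] {ψ : E}
    (hψ : ‖ψ‖ ≤ 1) (φ : κ → E) (hφ : ∀ j, RCLike.re ⟪ψ, φ j⟫_𝕜 = ‖φ j‖ ^ 2) {K : ℝ}
    (hK0 : 0 ≤ K) (hK : ∀ j k, j ≠ k → ‖⟪φ j, φ k⟫_𝕜‖ ≤ K * (‖φ j‖ * ‖φ k‖)) :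
    ∑ j, ‖φ j‖ ^ 2 ≤ 1 + K * (Fintype.card κ - 1) := by
  set t := ∑ j, ‖φ j‖ ^ 2
  have hC : 1 ≤ 1 + K * (Fintype.card κ - 1) := by
    have : (1 : ℝ) ≤ Fintype.card κ := by exact_mod_cast Fintype.card_pos
    nlinarith
  have ht : t ≤ ‖∑ j, φ j‖ := calc
    t = RCLike.re ⟪ψ, ∑ j, φ j⟫_𝕜 := by simp only [t, inner_sum, map_sum, hφ]
    _ ≤ ‖ψ‖ * ‖∑ j, φ j‖ := re_inner_le_norm _ _
    _ ≤ ‖∑ j, φ j‖ := mul_le_of_le_one_left (norm_nonneg _) hψ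
  have hsq := norm_sum_sq_le_of_norm_inner_le φ hK0 hK
  have ht0 : 0 ≤ t := sum_nonneg fun j _ => sq_nonneg _
  nlinarith

theorem sum_sum_norm_inner_sq_le {ι κ : Type*} [Fintype κ] [Nonempty κ] {b : κ → ι → E}
    (hb : ∀ j, Orthonormal 𝕜 (b j)) {c : ℝ} (hc0 : 0 ≤ c)
    (hc : ∀ j k, j ≠ k → ∀ x y, ‖⟪b j x, b k y⟫_𝕜‖ ≤ c) (L : κ → Finset ι) {M : ℝ}
    (hM0 : 0 ≤ M) (hM : ∀ j k, j ≠ k → √((#(L j) : ℝ) * #(L k)) ≤ M) {ψ : E} (hψ : ‖ψ‖ ≤ 1) :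
    ∑ j, ∑ x ∈ L j, ‖⟪b j x, ψ⟫_𝕜‖ ^ 2 ≤ 1 + c * M * (Fintype.card κ - 1) := by
  set φ : κ → E := fun j => ∑ x ∈ L j, ⟪b j x, ψ⟫_𝕜 • b j x
  have hφ : ∀ j, ‖φ j‖ ^ 2 = ∑ x ∈ L j, ‖⟪b j x, ψ⟫_𝕜‖ ^ 2 := fun j =>
    (hb j).norm_sum_smul_sq_s3 _ _
  simp only [← hφ]
  refine sum_norm_sq_le_of_norm_inner_le (𝕜 := 𝕜) hψ φ (fun j => ?_) (mul_nonneg hc0 hM0)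
    fun j k hjk => ?_
  · rw [hφ]
    exact re_inner_sum_inner_smul _ _ _
  calc ‖⟪φ j, φ k⟫_𝕜‖
      ≤ c * (∑ x ∈ L j, ‖⟪b j x, ψ⟫_𝕜‖) * ∑ y ∈ L k, ‖⟪b k y, ψ⟫_𝕜‖ :=
        norm_inner_sum_smul_sum_smul_le (hc j k hjk) _ _ _ _
    _ ≤ c * (√(#(L j) : ℝ) * ‖φ j‖) * (√(#(L k) : ℝ) * ‖φ k‖) := by
        gcongr
        · exact (hb j).sum_norm_le_sqrt_card_mul_norm_sum _ _
        · exact (hb k).sum_norm_le_sqrt_card_mul_norm_sum _ _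
    _ = c * √((#(L j) : ℝ) * #(L k)) * (‖φ j‖ * ‖φ k‖) := by
        rw [Real.sqrt_mul (Nat.cast_nonneg _)]
        ring
    _ ≤ c * M * (‖φ j‖ * ‖φ k‖) := by
        gcongr
        exact hM j k hjk

theorem Matrix.IsHermitian.star_dotProduct_mulVec_eq_sum {n : Type*} [Fintype n] [DecidableEq n]
    {A : Matrix n n 𝕜} (hA : A.IsHermitian) (v : EuclideanSpace 𝕜 n) :
    star v.ofLp ⬝ᵥ A *ᵥ v.ofLp =
      ∑ i, (hA.eigenvalues i : 𝕜) * (‖⟪hA.eigenvectorBasis i, v⟫_𝕜‖ ^ 2 : ℝ) := by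
  nth_rewrite 2 [← hA.eigenvectorBasis.sum_repr' v]
  simp only [WithLp.ofLp_sum, WithLp.ofLp_smul, Matrix.mulVec_sum, Matrix.mulVec_smul,
    hA.mulVec_eigenvectorBasis, dotProduct_sum, dotProduct_smul]
  refine sum_congr rfl fun i _ => ?_
  rw [dotProduct_comm, ← EuclideanSpace.inner_eq_star_dotProduct, smul_eq_mul,
    RCLike.real_smul_eq_coe_mul, mul_left_comm, ← inner_conj_symm v, RCLike.mul_conj,
    RCLike.ofReal_pow]

theorem Matrix.PosSemidef.sum_re_star_dotProduct_mulVec_le {n κ : Type*} [Fintype n]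
    [DecidableEq n] {ρ : Matrix n n 𝕜} (hρ : ρ.PosSemidef) (htr : ρ.trace = 1) (s : Finset κ)
    (v : κ → EuclideanSpace 𝕜 n) {K : ℝ}
    (hK : ∀ ψ : EuclideanSpace 𝕜 n, ‖ψ‖ = 1 → ∑ k ∈ s, ‖⟪v k, ψ⟫_𝕜‖ ^ 2 ≤ K) :
    ∑ k ∈ s, RCLike.re (star (v k).ofLp ⬝ᵥ ρ *ᵥ (v k).ofLp) ≤ K := by
  set u := hρ.isHermitian.eigenvectorBasis
  set p := hρ.isHermitian.eigenvalues
  have hp : ∑ i, p i = 1 := by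
    have := hρ.isHermitian.trace_eq_sum_eigenvalues
    rw [htr] at this
    exact_mod_cast this.symm
  calc ∑ k ∈ s, RCLike.re (star (v k).ofLp ⬝ᵥ ρ *ᵥ (v k).ofLp)
      = ∑ i, p i * ∑ k ∈ s, ‖⟪v k, u i⟫_𝕜‖ ^ 2 := by
        simp only [hρ.isHermitian.star_dotProduct_mulVec_eq_sum, map_sum, ← RCLike.ofReal_mul,
          RCLike.ofReal_re, mul_sum, norm_inner_symm (v _)]
        exact sum_comm
    _ ≤ ∑ i, p i * K := by
        gcongr with i
        · exact hρ.eigenvalues_nonneg i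
        · exact hK _ (u.orthonormal.1 i)
    _ = K := by rw [← sum_mul, hp, one_mul]

end

/-- Theorem 3 (uncertainty relation in terms of probabilities of sets):
for any m orthonormal bases of the n-qubit space with pairwise overlaps at most `c`,
any density matrix `ρ` and any subsets `L j ⊆ {0,1}ⁿ`,
`∑ j Q^j(L^j) ≤ 1 + c (m-1) max_{j≠k} √(|L^j|·|L^k|)`
(stated with an arbitrary upper bound `M` on the square roots). -/
theorem stmt3 {n m : ℕ} (hm : 2 ≤ m)
    (B : Fin m → OrthonormalBasis (Fin n → Bool) ℂ (EuclideanSpace ℂ (Fin n → Bool)))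
    (c : ℝ)
    (hc : ∀ j k : Fin m, j < k → ∀ x y, ‖(inner ℂ (B j x) (B k y) : ℂ)‖ ≤ c)
    (ρ : Matrix (Fin n → Bool) (Fin n → Bool) ℂ)
    (hρ : ρ.PosSemidef) (htr : ρ.trace = 1)
    (L : Fin m → Finset (Fin n → Bool))
    (M : ℝ)
    (hM : ∀ j k : Fin m, j ≠ k →
      Real.sqrt (((L j).card : ℝ) * ((L k).card : ℝ)) ≤ M) :
    ∑ j, ∑ x ∈ L j, outcomeProb B ρ j x ≤ 1 + c * ((m : ℝ) - 1) * M := by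
  have hc' : ∀ j k : Fin m, j ≠ k → ∀ x y, ‖⟪B j x, B k y⟫_ℂ‖ ≤ c := by
    intro j k hjk x y
    rcases hjk.lt_or_gt with h | h
    · exact hc j k h x y
    · rw [norm_inner_symm]
      exact hc k j h y x
  have h01 : (⟨0, by omega⟩ : Fin m) < ⟨1, by omega⟩ := Fin.mk_lt_mk.2 one_pos
  have hc0 : 0 ≤ c := (norm_nonneg _).trans (hc _ _ h01 (fun _ => false) (fun _ => false))
  have hM0 : 0 ≤ M := (Real.sqrt_nonneg _).trans (hM _ _ h01.ne)
  have : Nonempty (Fin m) := ⟨⟨0, by omega⟩⟩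
  have hsigma : ∑ j, ∑ x ∈ L j, outcomeProb B ρ j x =
      ∑ p ∈ univ.sigma L, RCLike.re (star (B p.1 p.2).ofLp ⬝ᵥ ρ *ᵥ (B p.1 p.2).ofLp) := by
    rw [sum_sigma]
    rfl
  rw [hsigma]
  refine hρ.sum_re_star_dotProduct_mulVec_le htr (univ.sigma L) (fun p => B p.1 p.2) fun ψ hψ => ?_
  rw [sum_sigma]
  convert sum_sum_norm_inner_sq_le (𝕜 := ℂ) (fun j => (B j).orthonormal) hc0 hc' L hM0 hM hψ.le
    using 1
  rw [Fintype.card_fin]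
  ring
end

section
/- Let ρ be an arbitrary density matrix on the 2ⁿ-dimensional Hilbert space of n qubits, and for j ∈ {1,…,m} let Q^j(x) = ⟨x|_j ρ |x⟩_j be the outcome distribution when ρ is measured in basis B_j. Then, for any 0 < ε < δ/4, there exist subsets E^1,…,E^m ⊆ {0,1}ⁿ such that (1) Σ_{j=1}^m Q^j(E^j) ≥ (m−1) − (2m−1)·2^{−εn}, and (2) for every j with Q^j(E^j) > 0 one has max_{x∈E^j} Q^j(x) ≤ 2^{−(δ/2−2ε)n} · Q^j(E^j) (equivalently, the min-entropy of X given J=j and the event X∈E^j is at least (δ/2 − 2ε)n), where Q^j(E^j) := Σ_{x∈E^j} Q^j(x). -/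
open scoped ComplexOrder

/-- `logOverlap n c = δ = -(1/n)·log₂(c²)`. -/
noncomputable def logOverlap (n : ℕ) (c : ℝ) : ℝ :=
  -(1 / (n : ℝ)) * Real.logb 2 (c ^ 2)

/-!
Call an outcome `x` of basis `j` heavy if `Q^j(x) > θ := 2^{-(δ/2-ε)n}`; there are at most `1/θ`
of them. Let `P_j` project onto the span of the heavy vectors of `B_j`. For `j ≠ k` the squared
Frobenius norm of `P_j P_k` is the sum of the squared overlaps of heavy vectors, at most
`c²/θ² = 2^{-2εn}`. Writing `ρ = σσ*`, the matrices `P_j σ` are thus almost orthogonal for the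
Frobenius inner product, while `‖P_j σ‖² = ⟪σ, P_j σ⟫ = Q^j(heavy)` and `‖σ‖ = 1`; this bounds the
total heavy mass `∑_j Q^j(heavy)` by `1 + (m-1)2^{-εn}`. Now let `E^j` be the light outcomes of basis
`j`, dropped when their mass is below `2^{-εn}`: each `x ∈ E^j` has
`Q^j(x) ≤ θ = 2^{-(δ/2-2ε)n}·2^{-εn} ≤ 2^{-(δ/2-2ε)n}·Q^j(E^j)`.
-/
open scoped InnerProductSpace Matrix.Norms.Frobenius
open Finset RCLike Matrix WithLp

section AlmostOrthogonal

variable {𝕜 E J : Type*} [RCLike 𝕜] [SeminormedAddCommGroup E] [InnerProductSpace 𝕜 E]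
  [Fintype J] {v : J → E} {d : ℝ}

theorem norm_sum_sq_le_of_norm_inner_le_s4 (hd : 0 ≤ d)
    (hv : ∀ j k, j ≠ k → ‖⟪v j, v k⟫_𝕜‖ ≤ d * (‖v j‖ * ‖v k‖)) :
    ‖∑ j, v j‖ ^ 2 ≤ (1 + (Fintype.card J - 1) * d) * ∑ j, ‖v j‖ ^ 2 := by
  classical
  have hterm : ∀ j k, re ⟪v j, v k⟫_𝕜 ≤
      d * (‖v j‖ * ‖v k‖) + if j = k then (1 - d) * ‖v j‖ ^ 2 else 0 := by
    intro j k
    split_ifs with hjk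
    · subst hjk
      rw [← norm_sq_eq_re_inner]
      exact le_of_eq (by ring)
    · simpa using (re_le_norm _).trans (hv j k hjk)
  have hcs : (∑ j, ‖v j‖) ^ 2 ≤ Fintype.card J * ∑ j, ‖v j‖ ^ 2 := sq_sum_le_card_mul_sum_sq
  calc ‖∑ j, v j‖ ^ 2 = ∑ j, ∑ k, re ⟪v j, v k⟫_𝕜 := by
        simp only [norm_sq_eq_re_inner (𝕜 := 𝕜), sum_inner, inner_sum, map_sum]
        exact sum_comm
    _ ≤ ∑ j, ∑ k, (d * (‖v j‖ * ‖v k‖) + if j = k then (1 - d) * ‖v j‖ ^ 2 else 0) := by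
        gcongr with j _ k _; exact hterm j k
    _ = d * (∑ j, ‖v j‖) ^ 2 + (1 - d) * ∑ j, ‖v j‖ ^ 2 := by
        simp only [sum_add_distrib, sum_ite_eq, mem_univ, if_true, ← mul_sum, sq, sum_mul_sum]
    _ ≤ (1 + (Fintype.card J - 1) * d) * ∑ j, ‖v j‖ ^ 2 := by nlinarith

theorem sum_norm_sq_le_of_norm_inner_le_s4 [Nonempty J] {u : E} (hu : ‖u‖ ≤ 1)
    (hvu : ∀ j, ‖v j‖ ^ 2 ≤ re ⟪u, v j⟫_𝕜) (hd : 0 ≤ d)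
    (hv : ∀ j k, j ≠ k → ‖⟪v j, v k⟫_𝕜‖ ≤ d * (‖v j‖ * ‖v k‖)) :
    ∑ j, ‖v j‖ ^ 2 ≤ 1 + (Fintype.card J - 1) * d := by
  set s := ∑ j, ‖v j‖ ^ 2
  have hs : 0 ≤ s := by positivity
  have hsum : s ≤ ‖∑ j, v j‖ := calc
    s ≤ ∑ j, re ⟪u, v j⟫_𝕜 := sum_le_sum fun j _ => hvu j
    _ = re ⟪u, ∑ j, v j⟫_𝕜 := by rw [inner_sum, map_sum]
    _ ≤ ‖u‖ * ‖∑ j, v j‖ := re_inner_le_norm _ _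
    _ ≤ ‖∑ j, v j‖ := mul_le_of_le_one_left (norm_nonneg _) hu
  have hcard : (1 : ℝ) ≤ Fintype.card J := by exact_mod_cast Fintype.card_pos
  have := (pow_le_pow_left₀ hs hsum 2).trans (norm_sum_sq_le_of_norm_inner_le_s4 hd hv)
  rcases hs.eq_or_lt with h | h
  · rw [← h]; nlinarith
  · nlinarith

end AlmostOrthogonal

section Frobenius

variable {𝕜 ι κ ν : Type*} [RCLike 𝕜] [Fintype ι] [Fintype κ] [Fintype ν]

-- Under `Matrix.Norms.Frobenius` the norm of `A` is by definition the norm of this vector, so the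
-- Frobenius norm comes with the inner product `⟪A, B⟫ = tr(Aᴴ B)`.
noncomputable def frobeniusVec (A : Matrix ι κ 𝕜) : PiLp 2 (fun _ : ι => EuclideanSpace 𝕜 κ) :=
  toLp 2 fun i => toLp 2 (A i)

lemma norm_frobeniusVec (A : Matrix ι κ 𝕜) : ‖frobeniusVec A‖ = ‖A‖ := rfl

lemma inner_frobeniusVec (A B : Matrix ι κ 𝕜) :
    ⟪frobeniusVec A, frobeniusVec B⟫_𝕜 = (Aᴴ * B).trace := by
  simp [frobeniusVec, PiLp.inner_apply, trace, mul_apply, sum_comm (γ := ι), mul_comm]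

lemma frobenius_norm_sq_eq_re_trace (A : Matrix ι κ 𝕜) : ‖A‖ ^ 2 = re (Aᴴ * A).trace := by
  rw [← norm_frobeniusVec, norm_sq_eq_re_inner (𝕜 := 𝕜), inner_frobeniusVec]

lemma frobenius_norm_sq_eq_sum (A : Matrix ι κ 𝕜) : ‖A‖ ^ 2 = ∑ i, ∑ j, ‖A i j‖ ^ 2 := by
  rw [← norm_frobeniusVec, frobeniusVec, PiLp.norm_sq_eq_of_L2]
  simp [EuclideanSpace.norm_sq_eq]

lemma frobenius_norm_sq_le (A : Matrix ι κ 𝕜) {c : ℝ} (hA : ∀ i j, ‖A i j‖ ≤ c) :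
    ‖A‖ ^ 2 ≤ Fintype.card ι * Fintype.card κ * c ^ 2 := by
  rw [frobenius_norm_sq_eq_sum]
  calc ∑ i, ∑ j, ‖A i j‖ ^ 2 ≤ ∑ _i : ι, ∑ _j : κ, c ^ 2 := by
        gcongr with i _ j _
        exact hA i j
    _ = _ := by simp [mul_assoc]

lemma frobenius_norm_mul_of_conjTranspose_mul_self_eq_one [DecidableEq κ] {V : Matrix ι κ 𝕜}
    (hV : Vᴴ * V = 1) (X : Matrix κ ν 𝕜) : ‖V * X‖ = ‖X‖ := by
  have : ‖V * X‖ ^ 2 = ‖X‖ ^ 2 := by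
    rw [frobenius_norm_sq_eq_re_trace, frobenius_norm_sq_eq_re_trace, conjTranspose_mul,
      Matrix.mul_assoc, ← Matrix.mul_assoc Vᴴ, hV, Matrix.one_mul]
  exact (pow_left_inj₀ (norm_nonneg _) (norm_nonneg _) two_ne_zero).mp this

lemma isStarProjection_mul_conjTranspose [DecidableEq κ] {V : Matrix ι κ 𝕜}
    (hV : Vᴴ * V = 1) : IsStarProjection (V * Vᴴ) where
  isIdempotentElem := by
    rw [IsIdempotentElem, Matrix.mul_assoc, ← Matrix.mul_assoc Vᴴ, hV, Matrix.one_mul]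
  isSelfAdjoint := by
    rw [IsSelfAdjoint, star_eq_conjTranspose, conjTranspose_mul, conjTranspose_conjTranspose]

lemma frobenius_norm_mul_conjTranspose_mul_mul_conjTranspose [DecidableEq κ] [DecidableEq ν]
    {V : Matrix ι κ 𝕜} {W : Matrix ι ν 𝕜} (hV : Vᴴ * V = 1) (hW : Wᴴ * W = 1) :
    ‖V * Vᴴ * (W * Wᴴ)‖ = ‖Vᴴ * W‖ := by
  rw [Matrix.mul_assoc, frobenius_norm_mul_of_conjTranspose_mul_self_eq_one hV,
    ← Matrix.mul_assoc, ← frobenius_norm_conjTranspose, conjTranspose_mul,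
    conjTranspose_conjTranspose, frobenius_norm_mul_of_conjTranspose_mul_self_eq_one hW,
    frobenius_norm_conjTranspose]

end Frobenius

section StarProjections

variable {𝕜 ι J : Type*} [RCLike 𝕜] [Fintype ι] [Fintype J] {d : ℝ}

open scoped MatrixOrder in
theorem sum_re_trace_mul_le_of_isStarProjection [Nonempty J] {ρ : Matrix ι ι 𝕜}
    (hρ : ρ.PosSemidef) (htr : ρ.trace = 1) {P : J → Matrix ι ι 𝕜}
    (hP : ∀ j, IsStarProjection (P j)) (hd : 0 ≤ d) (hPP : ∀ j k, j ≠ k → ‖P j * P k‖ ≤ d) :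
    ∑ j, re (ρ * P j).trace ≤ 1 + (Fintype.card J - 1) * d := by
  classical
  obtain ⟨σ, hρσ⟩ := CStarAlgebra.nonneg_iff_eq_mul_star_self.mp hρ.nonneg
  have hinner (A B : Matrix ι ι 𝕜) :
      ⟪frobeniusVec (A * σ), frobeniusVec (B * σ)⟫_𝕜 = (ρ * (Aᴴ * B)).trace := by
    rw [trace_mul_comm ρ, inner_frobeniusVec, conjTranspose_mul, Matrix.mul_assoc, trace_mul_comm,
      hρσ, star_eq_conjTranspose]
    simp only [Matrix.mul_assoc]
  have hPσ (j : J) : ‖frobeniusVec (P j * σ)‖ ^ 2 = re (ρ * P j).trace := by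
    rw [norm_sq_eq_re_inner (𝕜 := 𝕜), hinner, ← star_eq_conjTranspose,
      (hP j).isSelfAdjoint.star_eq, (hP j).isIdempotentElem.eq]
  have hσ : ‖frobeniusVec σ‖ = 1 := by
    rw [norm_frobeniusVec, ← pow_eq_one_iff_of_nonneg (norm_nonneg _) two_ne_zero,
      frobenius_norm_sq_eq_re_trace, trace_mul_comm, ← star_eq_conjTranspose, ← hρσ, htr, one_re]
  simp_rw [← hPσ]
  refine sum_norm_sq_le_of_norm_inner_le_s4 (𝕜 := 𝕜) hσ.le (fun j => ?_) hd fun j k hjk => ?_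
  · have h := hinner 1 (P j)
    rw [Matrix.one_mul, conjTranspose_one, Matrix.one_mul] at h
    rw [hPσ, h]
  · -- Idempotence inserts `P j * P k` between the two vectors, so that `hPP` applies.
    have hjk' : ⟪frobeniusVec (P j * σ), frobeniusVec (P k * σ)⟫_𝕜 =
        ⟪frobeniusVec (P j * σ), frobeniusVec (P j * P k * (P k * σ))⟫_𝕜 := by
      rw [← Matrix.mul_assoc, Matrix.mul_assoc (P j), (hP k).isIdempotentElem.eq, hinner, hinner,
        ← Matrix.mul_assoc _ (P j), ← star_eq_conjTranspose, (hP j).isSelfAdjoint.star_eq,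
        (hP j).isIdempotentElem.eq]
    rw [hjk']
    refine (norm_inner_le_norm _ _).trans ?_
    simp only [norm_frobeniusVec]
    calc ‖P j * σ‖ * ‖P j * P k * (P k * σ)‖
        ≤ ‖P j * σ‖ * (‖P j * P k‖ * ‖P k * σ‖) := by gcongr; exact frobenius_norm_mul _ _
      _ ≤ ‖P j * σ‖ * (d * ‖P k * σ‖) := by gcongr; exact hPP j k hjk
      _ = d * (‖P j * σ‖ * ‖P k * σ‖) := by ring

end StarProjections

section Columns

variable {𝕜 ι κ : Type*} [RCLike 𝕜] [Fintype ι]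

def columnMatrix (v : κ → EuclideanSpace 𝕜 ι) : Matrix ι κ 𝕜 := Matrix.of fun i x => v x i

lemma conjTranspose_columnMatrix_mul_apply {ν : Type*} (v : κ → EuclideanSpace 𝕜 ι)
    (w : ν → EuclideanSpace 𝕜 ι) (x : κ) (y : ν) :
    ((columnMatrix v)ᴴ * columnMatrix w) x y = ⟪v x, w y⟫_𝕜 := by
  simp [columnMatrix, mul_apply, EuclideanSpace.inner_eq_star_dotProduct, dotProduct, mul_comm]

lemma conjTranspose_columnMatrix_mul_self [Fintype κ] [DecidableEq κ] {v : κ → EuclideanSpace 𝕜 ι}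
    (hv : Orthonormal 𝕜 v) : (columnMatrix v)ᴴ * columnMatrix v = 1 := by
  ext x y
  rw [conjTranspose_columnMatrix_mul_apply, orthonormal_iff_ite.mp hv, one_apply]

lemma trace_mul_columnMatrix_mul_conjTranspose [Fintype κ] (ρ : Matrix ι ι 𝕜)
    (v : κ → EuclideanSpace 𝕜 ι) :
    (ρ * (columnMatrix v * (columnMatrix v)ᴴ)).trace = ∑ x, star ⇑(v x) ⬝ᵥ ρ *ᵥ ⇑(v x) := by
  rw [trace_mul_comm, Matrix.mul_assoc, trace_mul_comm, trace]
  refine Finset.sum_congr rfl fun x _ => ?_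
  simp [columnMatrix, mul_apply, dotProduct, mulVec, Finset.mul_sum, Finset.sum_mul, mul_assoc]
  exact Finset.sum_comm

end Columns

section Bases

variable {𝕜 ι : Type*} [RCLike 𝕜] [Fintype ι]

noncomputable def basisProj (b : OrthonormalBasis ι 𝕜 (EuclideanSpace 𝕜 ι)) (S : Finset ι) :
    Matrix ι ι 𝕜 :=
  columnMatrix (fun x : S => b x) * (columnMatrix fun x : S => b x)ᴴ

lemma conjTranspose_columnMatrix_basis_mul_self [DecidableEq ι]
    (b : OrthonormalBasis ι 𝕜 (EuclideanSpace 𝕜 ι)) (S : Finset ι) :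
    (columnMatrix fun x : S => b x)ᴴ * columnMatrix (fun x : S => b x) = 1 :=
  conjTranspose_columnMatrix_mul_self (b.orthonormal.comp _ Subtype.val_injective)

lemma isStarProjection_basisProj (b : OrthonormalBasis ι 𝕜 (EuclideanSpace 𝕜 ι)) (S : Finset ι) :
    IsStarProjection (basisProj b S) := by
  classical
  exact isStarProjection_mul_conjTranspose (conjTranspose_columnMatrix_basis_mul_self b S)

lemma trace_mul_basisProj (ρ : Matrix ι ι 𝕜) (b : OrthonormalBasis ι 𝕜 (EuclideanSpace 𝕜 ι))
    (S : Finset ι) :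
    (ρ * basisProj b S).trace = ∑ x ∈ S, star ⇑(b x) ⬝ᵥ ρ *ᵥ ⇑(b x) := by
  rw [basisProj, trace_mul_columnMatrix_mul_conjTranspose]
  exact S.sum_coe_sort fun x => star ⇑(b x) ⬝ᵥ ρ *ᵥ ⇑(b x)

lemma sum_dotProduct_mulVec_eq_trace (ρ : Matrix ι ι 𝕜)
    (b : OrthonormalBasis ι 𝕜 (EuclideanSpace 𝕜 ι)) :
    ∑ x, star ⇑(b x) ⬝ᵥ ρ *ᵥ ⇑(b x) = ρ.trace := by
  classical
  rw [← trace_mul_columnMatrix_mul_conjTranspose,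
    mul_eq_one_comm.mp (conjTranspose_columnMatrix_mul_self b.orthonormal), Matrix.mul_one]

lemma norm_basisProj_mul_basisProj_sq_le {b b' : OrthonormalBasis ι 𝕜 (EuclideanSpace 𝕜 ι)}
    {c : ℝ} (hc : ∀ x y, ‖⟪b x, b' y⟫_𝕜‖ ≤ c) (S S' : Finset ι) :
    ‖basisProj b S * basisProj b' S'‖ ^ 2 ≤ #S * #S' * c ^ 2 := by
  classical
  rw [basisProj, basisProj, frobenius_norm_mul_conjTranspose_mul_mul_conjTranspose
    (conjTranspose_columnMatrix_basis_mul_self b S)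
    (conjTranspose_columnMatrix_basis_mul_self b' S')]
  refine (frobenius_norm_sq_le (c := c) _ fun x y => ?_).trans (by simp)
  rw [conjTranspose_columnMatrix_mul_apply]
  exact hc x y

end Bases

lemma card_filter_lt_mul_le_sum {α : Type*} {s : Finset α} {f : α → ℝ} (hf : ∀ x ∈ s, 0 ≤ f x)
    (θ : ℝ) : #{x ∈ s | θ < f x} * θ ≤ ∑ x ∈ s, f x := calc
  #{x ∈ s | θ < f x} * θ ≤ ∑ x ∈ s with θ < f x, f x := by
    rw [← nsmul_eq_mul]
    exact card_nsmul_le_sum _ _ _ fun x hx => (mem_filter.mp hx).2.le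
  _ ≤ ∑ x ∈ s, f x := sum_le_sum_of_subset_of_nonneg (filter_subset _ _) fun x hx _ => hf x hx

section Measurement

variable {n m : ℕ}
  {B : Fin m → OrthonormalBasis (Fin n → Bool) ℂ (EuclideanSpace ℂ (Fin n → Bool))}
  {ρ : Matrix (Fin n → Bool) (Fin n → Bool) ℂ}

lemma outcomeProb_nonneg (hρ : ρ.PosSemidef) (j : Fin m) (x : Fin n → Bool) :
    0 ≤ outcomeProb B ρ j x :=
  (Complex.nonneg_iff.mp (hρ.dotProduct_mulVec_nonneg _)).1

lemma sum_outcomeProb_eq_re_trace_mul_basisProj (j : Fin m) (S : Finset (Fin n → Bool)) :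
    ∑ x ∈ S, outcomeProb B ρ j x = re (ρ * basisProj (B j) S).trace := by
  rw [trace_mul_basisProj, re_to_complex, Complex.re_sum]
  rfl

lemma sum_outcomeProb (htr : ρ.trace = 1) (j : Fin m) : ∑ x, outcomeProb B ρ j x = 1 := by
  rw [sum_outcomeProb_eq_re_trace_mul_basisProj, trace_mul_basisProj,
    sum_dotProduct_mulVec_eq_trace, htr, one_re]

theorem sum_sum_outcomeProb_gt_le [NeZero m] (hρ : ρ.PosSemidef) (htr : ρ.trace = 1) {c : ℝ}
    (hc : ∀ j k, j ≠ k → ∀ x y, ‖⟪B j x, B k y⟫_ℂ‖ ≤ c) {θ : ℝ} (hθ : 0 < θ) :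
    ∑ j, ∑ x with θ < outcomeProb B ρ j x, outcomeProb B ρ j x ≤ 1 + (m - 1) * (|c| / θ) := by
  set heavy := fun j => ({x | θ < outcomeProb B ρ j x} : Finset (Fin n → Bool))
  have hcard (j : Fin m) : (#(heavy j) : ℝ) ≤ 1 / θ := by
    rw [le_div_iff₀ hθ, ← sum_outcomeProb htr j]
    exact card_filter_lt_mul_le_sum (fun x _ => outcomeProb_nonneg hρ j x) θ
  simp_rw [sum_outcomeProb_eq_re_trace_mul_basisProj]
  simpa using sum_re_trace_mul_le_of_isStarProjection hρ htr
    (fun j => isStarProjection_basisProj (B j) (heavy j)) (by positivity) fun j k hjk => by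
      refine pow_le_pow_iff_left₀ (norm_nonneg _) (by positivity) two_ne_zero |>.mp ?_
      calc _ ≤ #(heavy j) * #(heavy k) * c ^ 2 :=
            norm_basisProj_mul_basisProj_sq_le (hc j k hjk) _ _
        _ ≤ 1 / θ * (1 / θ) * |c| ^ 2 := by rw [sq_abs]; gcongr <;> exact hcard _
        _ = (|c| / θ) ^ 2 := by ring

end Measurement

theorem exists_light_finsets_of_sum_heavy_le {J α : Type*} [Fintype J] [Fintype α]
    {Q : J → α → ℝ} (hQ : ∀ j, ∑ x, Q j x = 1) {θ d K : ℝ} (hd : 0 ≤ d) (hK : 0 ≤ K)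
    (hθ : θ ≤ K * d) (hheavy : ∑ j, ∑ x with θ < Q j x, Q j x ≤ 1 + (Fintype.card J - 1) * d) :
    ∃ E : J → Finset α,
      (Fintype.card J - 1) - (2 * Fintype.card J - 1) * d ≤ ∑ j, ∑ x ∈ E j, Q j x ∧
      ∀ j, 0 < ∑ x ∈ E j, Q j x → ∀ x ∈ E j, Q j x ≤ K * ∑ x' ∈ E j, Q j x' := by
  classical
  set light := fun j => ({x | Q j x ≤ θ} : Finset α)
  have hlight (j : J) : ∑ x ∈ light j, Q j x = 1 - ∑ x with θ < Q j x, Q j x := by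
    rw [← hQ j, ← sum_filter_add_sum_filter_not univ (fun x => Q j x ≤ θ)]
    simp only [not_le, light, add_sub_cancel_right]
  refine ⟨fun j => if d ≤ ∑ x ∈ light j, Q j x then light j else ∅, ?_, fun j hpos x hx => ?_⟩
  · calc (Fintype.card J - 1) - (2 * Fintype.card J - 1) * d
        ≤ ∑ j, (∑ x ∈ light j, Q j x - d) := by
          simp only [sum_sub_distrib, hlight, sum_const, card_univ, nsmul_eq_mul]
          linarith
      _ ≤ _ := by
          gcongr with j
          dsimp only
          split_ifs with h
          · linarith
          · simpa using (not_le.mp h).le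
  · dsimp only at hpos hx ⊢
    split_ifs at hpos hx ⊢ with h
    · calc Q j x ≤ θ := (mem_filter.mp hx).2
        _ ≤ K * d := hθ
        _ ≤ K * ∑ x' ∈ light j, Q j x' := by gcongr
    · simp at hx

lemma abs_eq_two_rpow_of_logOverlap_pos {n : ℕ} {c : ℝ} (h : 0 < logOverlap n c) :
    |c| = 2 ^ (-(logOverlap n c * n / 2)) := by
  have hn : (n : ℝ) ≠ 0 := by
    rintro hn
    simp [logOverlap, hn] at h
  have hc : c ≠ 0 := by
    rintro rfl
    simp [logOverlap] at h
  have hlog : Real.logb 2 (c ^ 2) = -(logOverlap n c * n) := by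
    rw [logOverlap]
    field_simp
  rw [← Real.sqrt_sq_eq_abs, Real.sqrt_eq_rpow,
    ← Real.rpow_logb two_pos one_lt_two.ne' (by positivity : 0 < c ^ 2), hlog,
    ← Real.rpow_mul two_pos.le]
  ring_nf

/-- Corollary 4: there exist "good" sets `E j` such that their total probability is at
least `(m-1) - (2m-1)·2^{-εn}` and, whenever `Q^j(E^j) > 0`, every `x ∈ E j` has
`Q^j(x) ≤ 2^{-(δ/2-2ε)n}·Q^j(E^j)`, i.e. the min-entropy of the outcome conditioned
on `J = j` and the event `X ∈ E j` is at least `(δ/2 - 2ε)n`. -/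
theorem stmt4 {n m : ℕ} (hm : 2 ≤ m)
    (B : Fin m → OrthonormalBasis (Fin n → Bool) ℂ (EuclideanSpace ℂ (Fin n → Bool)))
    (c : ℝ)
    (hc : ∀ j k : Fin m, j < k → ∀ x y, ‖(inner ℂ (B j x) (B k y) : ℂ)‖ ≤ c)
    (ρ : Matrix (Fin n → Bool) (Fin n → Bool) ℂ)
    (hρ : ρ.PosSemidef) (htr : ρ.trace = 1)
    (ε : ℝ) (hε0 : 0 < ε) (hε : ε < logOverlap n c / 4) :
    ∃ E : Fin m → Finset (Fin n → Bool),
      (((m : ℝ) - 1) - (2 * (m : ℝ) - 1) * (2 : ℝ) ^ (-(ε * (n : ℝ)))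
          ≤ ∑ j, ∑ x ∈ E j, outcomeProb B ρ j x) ∧
      (∀ j, 0 < ∑ x ∈ E j, outcomeProb B ρ j x →
        ∀ x ∈ E j, outcomeProb B ρ j x ≤
          (2 : ℝ) ^ (-((logOverlap n c / 2 - 2 * ε) * (n : ℝ))) *
            ∑ x' ∈ E j, outcomeProb B ρ j x') := by
  have hδ : 0 < logOverlap n c := by linarith
  have : NeZero m := ⟨by omega⟩
  have hc' : ∀ j k, j ≠ k → ∀ x y, ‖⟪B j x, B k y⟫_ℂ‖ ≤ c := fun j k hjk x y =>
    hjk.lt_or_gt.elim (hc j k · x y) fun hkj =>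
      norm_inner_symm (𝕜 := ℂ) (B j x) (B k y) ▸ hc k j hkj y x
  set θ : ℝ := 2 ^ (-((logOverlap n c / 2 - ε) * n))
  have hθ : |c| / θ = 2 ^ (-(ε * n)) := by
    rw [abs_eq_two_rpow_of_logOverlap_pos hδ, ← Real.rpow_sub two_pos]
    ring_nf
  have hheavy := sum_sum_outcomeProb_gt_le hρ htr hc' (by positivity : 0 < θ)
  rw [hθ] at hheavy
  obtain ⟨E, hmass, hmax⟩ := exists_light_finsets_of_sum_heavy_le (sum_outcomeProb htr)
    (θ := θ) (d := 2 ^ (-(ε * n))) (K := 2 ^ (-((logOverlap n c / 2 - 2 * ε) * n)))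
    (by positivity) (by positivity)
    (le_of_eq (by simp only [θ, ← Real.rpow_add two_pos]; ring_nf))
    (by simpa using hheavy)
  exact ⟨E, by simpa using hmass, hmax⟩
end

section
/- Let ρ be an arbitrary density matrix on the 2ⁿ-dimensional Hilbert space of n qubits, let P_J be an arbitrary probability distribution on {1,…,m}, and let the pair (J,X) have joint distribution P_{JX}(j,x) = P_J(j)·Q^j(x), where Q^j(x) = ⟨x|_j ρ |x⟩_j is the outcome distribution when ρ is measured in basis B_j. Then, for any 0 < ε < δ/4, there exists a joint probability distribution of random variables (J, J', X, Ψ) with J' taking values in {1,…,m} and Ψ a {true,false}-valued event, such that: (1) the marginal distribution of (J,X) equals P_{JX}; (2) J and J' are independent; (3) Pr[Ψ] ≥ 1 − 2·2^{−εn}; and (4) for all j ≠ j' in {1,…,m} with Pr[J=j, J'=j', Ψ] > 0, max_x Pr[X=x | J=j, J'=j', Ψ] ≤ 2 · 2^{−(δ/2−2ε)n}, i.e., H_min(X | J=j, J'=j', Ψ) ≥ (δ/2 − 2ε)n − 1. -/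
open scoped ComplexOrder

open Finset Matrix
open scoped InnerProductSpace

/-!
Write `ρ = ∑ᵢ |uᵢ⟩⟨uᵢ|` and treat each `u = uᵢ` separately, with `s = 2^{-εn}` and `θ = 2c/s`.
Call an outcome `x` of basis `j` heavy if `|⟨x|_j u⟩|² > θ‖u‖²`, and let `v_j` be the projection
of `u` onto the heavy basis vectors, of squared norm `h_j` (the heavy mass). Two heavy vectors of
different bases overlap by at most `c`, so `|⟨v_j, v_k⟩| ≤ (c / θ‖u‖²) h_j h_k`; comparing
`⟨∑ v_j, u⟩ = ∑ h_j` with `‖∑ v_j‖ ‖u‖` then gives `∑_j (h_j - s‖u‖²)⁺ ≤ ‖u‖²`: all bases but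
at most one have small heavy mass.

So `J'` can be drawn, independently of `J`, from a law `R` with `R_j ≥ h_j - s‖u‖²`. Heavy outcomes
of basis `j` are coupled with `J' = j` as far as `R_j` allows, and everything else is coupled as
a product. `Ψ` fails on the heavy mass left over (at most `s‖u‖²`) and on the light outcomes when
these carry at most `s‖u‖²`. Given `Ψ` and `J' ≠ J` only light outcomes remain, each of mass at
most `θ‖u‖²` out of more than `s‖u‖²`, whence the factor `θ / s = 2c/s² = 2·2^{-(δ/2-2ε)n}`.
-/

theorem exists_le_sum_eq_of_le_sum {ι : Type*} {q : ι → ℝ} (hq : ∀ x, 0 ≤ q x) (H : Finset ι)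
    {η : ℝ} (hη : 0 ≤ η) (hηH : η ≤ ∑ x ∈ H, q x) :
    ∃ α : ι → ℝ, (∀ x, 0 ≤ α x) ∧ (∀ x, α x ≤ q x) ∧ (∀ x ∉ H, α x = 0) ∧ ∑ x ∈ H, α x = η := by
  classical
  set h := ∑ x ∈ H, q x
  have hh : 0 ≤ h := sum_nonneg fun x _ => hq x
  refine ⟨fun x => if x ∈ H then η / h * q x else 0, fun x => ?_, fun x => ?_,
    fun x hx => if_neg hx, ?_⟩
  · dsimp only
    split_ifs
    · exact mul_nonneg (div_nonneg hη hh) (hq x)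
    · exact le_rfl
  · dsimp only
    split_ifs
    · exact mul_le_of_le_one_left (hq x) (div_le_one_of_le₀ hηH hh)
    · exact hq x
  · rw [sum_congr rfl fun x hx => if_pos hx, ← mul_sum]
    rcases hh.eq_or_lt with h0 | h0
    · rw [← h0, le_antisymm (h0 ▸ hηH) hη]
      simp
    · exact div_mul_cancel₀ η h0.ne'

theorem exists_le_of_sum_le {κ : Type*} [Fintype κ] [DecidableEq κ] [Nonempty κ] {w : κ → ℝ}
    {a : ℝ} (h : ∑ j, w j ≤ a) :
    ∃ R : κ → ℝ, (∀ j, w j ≤ R j) ∧ ∑ j, R j = a := by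
  let j₀ : κ := Classical.arbitrary κ
  refine ⟨w + Pi.single j₀ (a - ∑ j, w j), fun j => ?_, ?_⟩
  · by_cases hj : j = j₀ <;> simp [hj, h]
  · simp [sum_add_distrib]

section Coupling

variable {ι κ : Type*} [Fintype ι] [Fintype κ]

/-- `P j' x ψ` is the (unnormalised) law of `(J', X, Ψ)` given `J = j`; requiring the same
`J'`-marginal `R` for every `j` is what makes `J'` independent of `J`. -/
structure IsFlatCoupling (q : ι → ℝ) (R : κ → ℝ) (j : κ) (f K : ℝ)
    (P : κ → ι → Bool → ℝ) : Prop where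
  nonneg : ∀ j' x ψ, 0 ≤ P j' x ψ
  marginal_outcome : ∀ x, ∑ j', ∑ ψ, P j' x ψ = q x
  marginal_choice : ∀ j', ∑ x, ∑ ψ, P j' x ψ = R j'
  failure_le : ∑ j', ∑ x, P j' x false ≤ f
  flat : ∀ j', j ≠ j' → ∀ x, P j' x true ≤ K * ∑ x', P j' x' true

namespace IsFlatCoupling

variable {q q' : ι → ℝ} {R R' : κ → ℝ} {j : κ} {f f' K : ℝ} {P P' : κ → ι → Bool → ℝ}

theorem zero : IsFlatCoupling (0 : ι → ℝ) (0 : κ → ℝ) j 0 K 0 where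
  nonneg _ _ _ := le_rfl
  marginal_outcome _ := by simp
  marginal_choice _ := by simp
  failure_le := by simp
  flat _ _ _ := by simp

theorem add (h : IsFlatCoupling q R j f K P) (h' : IsFlatCoupling q' R' j f' K P') :
    IsFlatCoupling (q + q') (R + R') j (f + f') K (P + P') where
  nonneg j' x ψ := add_nonneg (h.nonneg j' x ψ) (h'.nonneg j' x ψ)
  marginal_outcome x := by
    simp only [Pi.add_apply, sum_add_distrib, h.marginal_outcome, h'.marginal_outcome]
  marginal_choice j' := by
    simp only [Pi.add_apply, sum_add_distrib, h.marginal_choice, h'.marginal_choice]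
  failure_le := by simpa [sum_add_distrib] using add_le_add h.failure_le h'.failure_le
  flat j' hj x := by
    simpa [sum_add_distrib, mul_add] using add_le_add (h.flat j' hj x) (h'.flat j' hj x)

theorem sum {α : Type*} {s : Finset α} {q : α → ι → ℝ} {R : α → κ → ℝ} {f : α → ℝ}
    {P : α → κ → ι → Bool → ℝ} (h : ∀ i ∈ s, IsFlatCoupling (q i) (R i) j (f i) K (P i)) :
    IsFlatCoupling (∑ i ∈ s, q i) (∑ i ∈ s, R i) j (∑ i ∈ s, f i) K (∑ i ∈ s, P i) := by
  classical
  induction s using Finset.induction_on with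
  | empty => simpa using zero
  | insert a s ha ih =>
    simp only [sum_insert ha]
    exact (h a (mem_insert_self a s)).add (ih fun i hi => h i (mem_insert_of_mem hi))

theorem sub_le_sum_true (h : IsFlatCoupling q R j f K P) :
    ∑ j', R j' - f ≤ ∑ j', ∑ x, P j' x true := by
  have htotal : ∑ j', R j' = ∑ j', ∑ x, P j' x true + ∑ j', ∑ x, P j' x false := by
    simp only [← h.marginal_choice, Fintype.sum_bool, sum_add_distrib]
  linarith [h.failure_le]

end IsFlatCoupling

theorem isFlatCoupling_dirac [DecidableEq κ] {α : ι → ℝ} (hα : ∀ x, 0 ≤ α x) (j : κ) (K : ℝ) :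
    IsFlatCoupling α (Pi.single j (∑ x, α x)) j 0 K
      (fun j' x ψ => if j' = j ∧ ψ = true then α x else 0) where
  nonneg j' x ψ := by split_ifs <;> simp [hα]
  marginal_outcome x := by simp
  marginal_choice j' := by by_cases hj : j' = j <;> simp [hj]
  failure_le := by simp
  flat j' hj x := by simp [Ne.symm hj]

theorem isFlatCoupling_prod {μ : ι → ℝ} {ν : κ → ℝ} (hμ : ∀ x, 0 ≤ μ x) (hν : ∀ j, 0 ≤ ν j)
    (hμν : ∑ x, μ x = ∑ j, ν j) (τ : ι → Bool) (j : κ) {f K : ℝ}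
    (hf : ∑ x, (if τ x then 0 else μ x) ≤ f)
    (hK : ∀ x, (if τ x then μ x else 0) ≤ K * ∑ y, if τ y then μ y else 0) :
    IsFlatCoupling μ ν j f K
      (fun j' x ψ => (if τ x = ψ then μ x else 0) * (ν j' / ∑ k, ν k)) := by
  have hZ : 0 ≤ ∑ k, ν k := sum_nonneg fun k _ => hν k
  have hμZ : ∀ x, μ x * ((∑ k, ν k) / ∑ k, ν k) = μ x := by
    intro x
    rcases hZ.eq_or_lt with hZ0 | hZ0
    · have : μ x = 0 := (sum_eq_zero_iff_of_nonneg fun y _ => hμ y).1 (hμν.trans hZ0.symm) x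
          (mem_univ x)
      simp [this]
    · rw [div_self hZ0.ne', mul_one]
  have hνZ : ∀ j', (∑ k, ν k) * (ν j' / ∑ k, ν k) = ν j' := by
    intro j'
    rcases hZ.eq_or_lt with hZ0 | hZ0
    · have : ν j' = 0 := (sum_eq_zero_iff_of_nonneg fun k _ => hν k).1 hZ0.symm j' (mem_univ j')
      simp [this]
    · field_simp
  have hψ : ∀ x, ∑ ψ, (if τ x = ψ then μ x else 0) = μ x := fun x => by simp
  refine ⟨fun j' x ψ => ?_, fun x => ?_, fun j' => ?_, ?_, fun j' _ x => ?_⟩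
  · split_ifs
    · exact mul_nonneg (hμ x) (div_nonneg (hν j') hZ)
    · simp
  · simp only [← mul_sum, ← sum_mul, hψ, ← sum_div, hμZ]
  · simp only [← sum_mul, hψ, hμν, hνZ]
  · have hfalse : ∀ x, (if τ x = false then μ x else 0) = if τ x then 0 else μ x := fun x => by
      cases τ x <;> rfl
    simp only [← sum_mul, ← mul_sum, ← sum_div, hfalse]
    refine (mul_le_of_le_one_right (sum_nonneg fun x _ => ?_) (div_self_le_one _)).trans hf
    split_ifs <;> simp [hμ]
  · simp only [← sum_mul, ← mul_assoc]
    exact mul_le_mul_of_nonneg_right (hK x) (div_nonneg (hν j') hZ)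

theorem exists_isFlatCoupling_of_light [DecidableEq ι] {μ : ι → ℝ} {ν : κ → ℝ}
    (hμ : ∀ x, 0 ≤ μ x) (hν : ∀ j, 0 ≤ ν j) (hμν : ∑ x, μ x = ∑ j, ν j) (j : κ) (H : Finset ι)
    {b K : ℝ} (hK : 0 ≤ K) (hH : ∑ x ∈ H, μ x ≤ b) (hlight : ∀ x ∉ H, μ x ≤ K * b) :
    ∃ P, IsFlatCoupling μ ν j (2 * b) K P := by
  set l := ∑ x ∈ Hᶜ, μ x
  have hl : 0 ≤ l := sum_nonneg fun x _ => hμ x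
  have hHl : ∑ x ∈ H, μ x + l = ∑ x, μ x := sum_add_sum_compl H μ
  have hb : 0 ≤ b := (sum_nonneg fun x _ => hμ x).trans hH
  -- the light outcomes are declared successful only when they carry more than `b`
  set τ : ι → Bool := fun x => decide (x ∉ H ∧ b < l)
  have hf : ∑ x, (if τ x then 0 else μ x) ≤ 2 * b := by
    by_cases hbl : b < l
    · have hτ : ∀ x, (if τ x then 0 else μ x) = if x ∈ H then μ x else 0 := fun x => by
        by_cases hx : x ∈ H <;> simp [τ, hx, hbl]
      rw [sum_congr rfl fun x _ => hτ x, sum_ite_mem, univ_inter]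
      linarith
    · have hτ : ∀ x, (if τ x then 0 else μ x) = μ x := fun x => by simp [τ, hbl]
      rw [sum_congr rfl fun x _ => hτ x, ← hHl]
      linarith
  have hflat : ∀ x, (if τ x then μ x else 0) ≤ K * ∑ y, if τ y then μ y else 0 := by
    by_cases hbl : b < l
    · have hτ : ∀ x, (if τ x then μ x else 0) = if x ∈ Hᶜ then μ x else 0 := fun x => by
        by_cases hx : x ∈ H <;> simp [τ, hx, hbl]
      intro x
      rw [hτ, sum_congr rfl fun y _ => hτ y, sum_ite_mem, univ_inter]
      split_ifs with hx
      · exact (hlight x (mem_compl.1 hx)).trans (mul_le_mul_of_nonneg_left hbl.le hK)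
      · positivity
    · simp [τ, hbl]
  exact ⟨_, isFlatCoupling_prod hμ hν hμν τ j hf hflat⟩

theorem exists_isFlatCoupling [DecidableEq ι] [DecidableEq κ] {q : ι → ℝ} (hq : ∀ x, 0 ≤ q x)
    {R : κ → ℝ} (hR : ∀ j, 0 ≤ R j) (hRq : ∑ j, R j = ∑ x, q x) (j : κ) (H : Finset ι)
    {b K : ℝ} (hb : 0 ≤ b) (hK : 0 ≤ K) (hlight : ∀ x ∉ H, q x ≤ K * b)
    (hRj : ∑ x ∈ H, q x - b ≤ R j) :
    ∃ P, IsFlatCoupling q R j (2 * b) K P := by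
  -- mass `η` of the heavy outcomes is coupled deterministically with `J' = j`
  set η := min (∑ x ∈ H, q x) (R j)
  obtain ⟨α, hα, hαq, hαH, hαη⟩ := exists_le_sum_eq_of_le_sum hq H
    (le_min (sum_nonneg fun x _ => hq x) (hR j)) (min_le_left _ _)
  have hαsum : ∑ x, α x = η :=
    (sum_subset (subset_univ H) fun x _ hx => hαH x hx).symm.trans hαη
  set μ : ι → ℝ := fun x => q x - α x
  set ν : κ → ℝ := fun j' => R j' - (Pi.single j η : κ → ℝ) j'
  have hμ : ∀ x, 0 ≤ μ x := fun x => sub_nonneg.2 (hαq x)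
  have hν : ∀ j', 0 ≤ ν j' := fun j' => by
    by_cases hj : j' = j <;> simp [ν, hj, hR j', η]
  have hμν : ∑ x, μ x = ∑ j', ν j' := by
    simp only [μ, ν, sum_sub_distrib, hαsum, sum_pi_single', mem_univ, if_true, hRq]
  have hμH : ∑ x ∈ H, μ x ≤ b := by
    rw [sum_sub_distrib, hαη]
    rcases min_choice (∑ x ∈ H, q x) (R j) with he | he <;> simp only [he] <;> linarith
  have hμlight : ∀ x ∉ H, μ x ≤ K * b := fun x hx => by simpa [μ, hαH x hx] using hlight x hx
  obtain ⟨P, hP⟩ := exists_isFlatCoupling_of_light hμ hν hμν j H hK hμH hμlight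
  have hsum := (isFlatCoupling_dirac hα j K).add hP
  have hq' : α + μ = q := funext fun x => add_sub_cancel (α x) (q x)
  have hR' : Pi.single j (∑ x, α x) + ν = R := funext fun j' => by simp [ν, hαsum]
  rw [hq', hR', zero_add] at hsum
  exact ⟨_, hsum⟩

theorem exists_joint_of_isFlatCoupling {PJ : κ → ℝ} (hPJ : ∀ j, 0 ≤ PJ j) (hPJ1 : ∑ j, PJ j = 1)
    {Q : κ → ι → ℝ} {R : κ → ℝ} (hR : ∑ j, R j = 1) {f K : ℝ} {P : κ → κ → ι → Bool → ℝ}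
    (hP : ∀ j, IsFlatCoupling (Q j) R j f K (P j)) :
    ∃ p : κ → κ → ι → Bool → ℝ,
      (∀ j j' x ψ, 0 ≤ p j j' x ψ) ∧
      (∑ j, ∑ j', ∑ x, ∑ ψ, p j j' x ψ) = 1 ∧
      (∀ j x, ∑ j', ∑ ψ, p j j' x ψ = PJ j * Q j x) ∧
      (∀ j j', ∑ x, ∑ ψ, p j j' x ψ = PJ j * ∑ j₀, ∑ x, ∑ ψ, p j₀ j' x ψ) ∧
      (1 - f ≤ ∑ j, ∑ j', ∑ x, p j j' x true) ∧
      (∀ j j', j ≠ j' → ∀ x, p j j' x true ≤ K * ∑ x', p j j' x' true) := by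
  refine ⟨fun j j' x ψ => PJ j * P j j' x ψ,
    fun j j' x ψ => mul_nonneg (hPJ j) ((hP j).nonneg j' x ψ),
    ?_, fun j x => ?_, fun j j' => ?_, ?_, fun j j' hj x => ?_⟩
  · simp only [← mul_sum, (hP _).marginal_choice, hR, mul_one, hPJ1]
  · simp only [← mul_sum, (hP j).marginal_outcome]
  · simp only [← mul_sum, (hP _).marginal_choice, ← sum_mul, hPJ1, one_mul]
  · calc 1 - f = ∑ j, PJ j * (∑ j', R j' - f) := by rw [← sum_mul, hPJ1, hR, one_mul]
      _ ≤ ∑ j, ∑ j', ∑ x, PJ j * P j j' x true := sum_le_sum fun j _ => by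
          simp only [← mul_sum]
          exact mul_le_mul_of_nonneg_left (hP j).sub_le_sum_true (hPJ j)
  · simp only [← mul_sum]
    rw [mul_left_comm]
    exact mul_le_mul_of_nonneg_left ((hP j).flat j' hj x) (hPJ j)

end Coupling

section AlmostOrthogonal

variable {𝕜 E κ : Type*} [RCLike 𝕜] [NormedAddCommGroup E] [InnerProductSpace 𝕜 E]

theorem sq_sum_norm_sq_le_of_almost_orthogonal {v : κ → E} {u : E} {A : Finset κ} {C : ℝ}
    (hC : 0 ≤ C) (hvu : ∀ j ∈ A, ⟪v j, u⟫_𝕜 = ((‖v j‖ ^ 2 : ℝ) : 𝕜))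
    (hvv : ∀ j ∈ A, ∀ k ∈ A, j ≠ k → ‖⟪v j, v k⟫_𝕜‖ ≤ C * ‖v j‖ ^ 2 * ‖v k‖ ^ 2) :
    (∑ j ∈ A, ‖v j‖ ^ 2) ^ 2 ≤ (∑ j ∈ A, ‖v j‖ ^ 2 + C * (∑ j ∈ A, ‖v j‖ ^ 2) ^ 2) * ‖u‖ ^ 2 := by
  classical
  set W := ∑ j ∈ A, v j
  set T := ∑ j ∈ A, ‖v j‖ ^ 2
  have hT : 0 ≤ T := sum_nonneg fun j _ => by positivity
  have hWu : ⟪W, u⟫_𝕜 = (T : 𝕜) := by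
    rw [sum_inner, sum_congr rfl hvu, RCLike.ofReal_sum]
  have hTW : T ≤ ‖W‖ * ‖u‖ := by
    calc T = RCLike.re ⟪W, u⟫_𝕜 := by rw [hWu, RCLike.ofReal_re]
      _ ≤ ‖⟪W, u⟫_𝕜‖ := RCLike.re_le_norm _
      _ ≤ ‖W‖ * ‖u‖ := norm_inner_le_norm W u
  have hpair : ∀ j ∈ A, ∀ k ∈ A, RCLike.re ⟪v j, v k⟫_𝕜 ≤
      (if j = k then ‖v j‖ ^ 2 else 0) + C * ‖v j‖ ^ 2 * ‖v k‖ ^ 2 := by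
    intro j hj k hk
    by_cases hjk : j = k
    · subst hjk
      rw [if_pos rfl, inner_self_eq_norm_sq]
      have : 0 ≤ C * ‖v j‖ ^ 2 * ‖v j‖ ^ 2 := by positivity
      linarith
    · rw [if_neg hjk, zero_add]
      exact (RCLike.re_le_norm _).trans (hvv j hj k hk hjk)
  have hW : ‖W‖ ^ 2 ≤ T + C * T ^ 2 := by
    calc ‖W‖ ^ 2 = ∑ j ∈ A, ∑ k ∈ A, RCLike.re ⟪v j, v k⟫_𝕜 := by
          rw [← inner_self_eq_norm_sq (𝕜 := 𝕜), sum_inner, map_sum]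
          refine sum_congr rfl fun j _ => ?_
          rw [inner_sum, map_sum]
      _ ≤ ∑ j ∈ A, ∑ k ∈ A, ((if j = k then ‖v j‖ ^ 2 else 0) + C * ‖v j‖ ^ 2 * ‖v k‖ ^ 2) :=
          sum_le_sum fun j hj => sum_le_sum fun k hk => hpair j hj k hk
      _ = T + C * T ^ 2 := by
          simp only [sum_add_distrib, sum_ite_eq, ← mul_sum, ← sum_mul, sum_ite_mem, inter_self]
          ring
  calc T ^ 2 ≤ (‖W‖ * ‖u‖) ^ 2 := pow_le_pow_left₀ hT hTW 2
    _ = ‖W‖ ^ 2 * ‖u‖ ^ 2 := mul_pow _ _ _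
    _ ≤ (T + C * T ^ 2) * ‖u‖ ^ 2 := by gcongr

end AlmostOrthogonal

section Heavy

variable {𝕜 E ι : Type*} [RCLike 𝕜] [NormedAddCommGroup E] [InnerProductSpace 𝕜 E] [Fintype ι]

noncomputable def heavySet (b : OrthonormalBasis ι 𝕜 E) (u : E) (t : ℝ) : Finset ι :=
  univ.filter fun x => t < ‖⟪b x, u⟫_𝕜‖ ^ 2

noncomputable def heavyMass (b : OrthonormalBasis ι 𝕜 E) (u : E) (t : ℝ) : ℝ :=
  ∑ x ∈ heavySet b u t, ‖⟪b x, u⟫_𝕜‖ ^ 2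

noncomputable def heavyPart (b : OrthonormalBasis ι 𝕜 E) (u : E) (t : ℝ) : E :=
  ∑ x ∈ heavySet b u t, ⟪b x, u⟫_𝕜 • b x

variable (b : OrthonormalBasis ι 𝕜 E) (u : E) (t : ℝ)

theorem heavyMass_nonneg : 0 ≤ heavyMass b u t := sum_nonneg fun _ _ => by positivity

theorem heavyMass_le : heavyMass b u t ≤ ‖u‖ ^ 2 := by
  rw [← b.sum_sq_norm_inner_right u]
  exact sum_le_sum_of_subset_of_nonneg (subset_univ _) fun _ _ _ => by positivity

theorem inner_heavyPart_left : ⟪heavyPart b u t, u⟫_𝕜 = (heavyMass b u t : 𝕜) := by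
  simp only [heavyPart, heavyMass, sum_inner, inner_smul_left, RCLike.conj_mul,
    RCLike.ofReal_sum, RCLike.ofReal_pow]

theorem norm_heavyPart_sq : ‖heavyPart b u t‖ ^ 2 = heavyMass b u t := by
  rw [← inner_self_eq_norm_sq (𝕜 := 𝕜), heavyPart,
    b.orthonormal.inner_sum, heavyMass]
  simp only [RCLike.conj_mul, map_sum, ← RCLike.ofReal_pow, RCLike.ofReal_re]

theorem sqrt_mul_sum_norm_inner_le_heavyMass :
    √t * ∑ x ∈ heavySet b u t, ‖⟪b x, u⟫_𝕜‖ ≤ heavyMass b u t := by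
  rw [mul_sum, heavyMass]
  refine sum_le_sum fun x hx => ?_
  have hx : t < ‖⟪b x, u⟫_𝕜‖ ^ 2 := (mem_filter.1 hx).2
  have : √t ≤ ‖⟪b x, u⟫_𝕜‖ := Real.sqrt_le_iff.2 ⟨norm_nonneg _, hx.le⟩
  nlinarith [norm_nonneg ⟪b x, u⟫_𝕜]

theorem norm_inner_heavyPart_le {b' : OrthonormalBasis ι 𝕜 E} {c : ℝ}
    (hc : ∀ x y, ‖⟪b x, b' y⟫_𝕜‖ ≤ c) (hc0 : 0 ≤ c) (ht : 0 < t) :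
    ‖⟪heavyPart b u t, heavyPart b' u t⟫_𝕜‖ ≤ c / t * heavyMass b u t * heavyMass b' u t := by
  set S := ∑ x ∈ heavySet b u t, ‖⟪b x, u⟫_𝕜‖
  set S' := ∑ y ∈ heavySet b' u t, ‖⟪b' y, u⟫_𝕜‖
  have hSS : ‖⟪heavyPart b u t, heavyPart b' u t⟫_𝕜‖ ≤ c * (S * S') := by
    simp only [heavyPart, sum_inner, inner_sum, inner_smul_left, inner_smul_right]
    calc _ ≤ ∑ y ∈ heavySet b' u t, ‖⟪b' y, u⟫_𝕜‖ * ∑ x ∈ heavySet b u t, ‖⟪b x, u⟫_𝕜‖ * c := by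
          refine (norm_sum_le _ _).trans (sum_le_sum fun y _ => ?_)
          rw [norm_mul]
          refine mul_le_mul_of_nonneg_left ((norm_sum_le _ _).trans (sum_le_sum fun x _ => ?_))
            (norm_nonneg _)
          rw [norm_mul, RCLike.norm_conj]
          exact mul_le_mul_of_nonneg_left (hc x y) (norm_nonneg _)
      _ = c * (S * S') := by rw [← sum_mul, ← sum_mul]; ring
  have hS := sqrt_mul_sum_norm_inner_le_heavyMass b u t
  have hS' := sqrt_mul_sum_norm_inner_le_heavyMass b' u t
  have hSS' : t * (S * S') ≤ heavyMass b u t * heavyMass b' u t := by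
    calc t * (S * S') = (√t * S) * (√t * S') := by
          rw [mul_mul_mul_comm, Real.mul_self_sqrt ht.le]
      _ ≤ _ := mul_le_mul hS hS' (by positivity) (heavyMass_nonneg b u t)
  calc _ ≤ c * (S * S') := hSS
    _ = c / t * (t * (S * S')) := by field_simp
    _ ≤ c / t * (heavyMass b u t * heavyMass b' u t) := by gcongr
    _ = _ := by ring

variable {κ : Type*} {B : κ → OrthonormalBasis ι 𝕜 E} {c θ : ℝ}

theorem sum_heavyMass_mul_le (hB : ∀ j k, j ≠ k → ∀ x y, ‖⟪B j x, B k y⟫_𝕜‖ ≤ c) (hc : 0 ≤ c)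
    (hθ : 0 < θ) (A : Finset κ) :
    (∑ j ∈ A, heavyMass (B j) u (θ * ‖u‖ ^ 2)) * (1 - c / θ) ≤ ‖u‖ ^ 2 := by
  set t := θ * ‖u‖ ^ 2
  set T := ∑ j ∈ A, heavyMass (B j) u t
  have hT : 0 ≤ T := sum_nonneg fun j _ => heavyMass_nonneg _ _ _
  rcases (norm_nonneg u).eq_or_lt with hu | hu
  · have : T = 0 := sum_eq_zero fun j _ =>
      le_antisymm (by simpa [← hu] using heavyMass_le (B j) u t) (heavyMass_nonneg _ _ _)
    simp [this]
  have ht : 0 < t := by positivity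
  have key := sq_sum_norm_sq_le_of_almost_orthogonal (𝕜 := 𝕜) (u := u) (A := A)
    (v := fun j => heavyPart (B j) u t) (C := c / t) (by positivity)
    (fun j _ => by simp only [inner_heavyPart_left, norm_heavyPart_sq])
    (fun j _ k _ hjk => by
      simpa only [norm_heavyPart_sq] using norm_inner_heavyPart_le (B j) u t (hB j k hjk) hc ht)
  simp only [norm_heavyPart_sq] at key
  have hct : c / t * ‖u‖ ^ 2 = c / θ := by simp only [t]; field_simp
  have key' : T ^ 2 ≤ T * ‖u‖ ^ 2 + c / θ * T ^ 2 := by linear_combination key + T ^ 2 * hct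
  rcases hT.eq_or_lt with hT0 | hT0
  · rw [← hT0, zero_mul]; positivity
  exact le_of_mul_le_mul_left (by linear_combination key') hT0

theorem sum_max_heavyMass_sub_le [Fintype κ] (hB : ∀ j k, j ≠ k → ∀ x y, ‖⟪B j x, B k y⟫_𝕜‖ ≤ c)
    (hc : 0 ≤ c) (hθ : 0 < θ) {s : ℝ} (hcθ : c / θ ≤ s / 2) (hs : s ≤ 1) :
    ∑ j, max (heavyMass (B j) u (θ * ‖u‖ ^ 2) - s * ‖u‖ ^ 2) 0 ≤ ‖u‖ ^ 2 := by
  classical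
  set h := fun j => heavyMass (B j) u (θ * ‖u‖ ^ 2)
  have hmax : ∀ j, max (h j - s * ‖u‖ ^ 2) 0 = if s * ‖u‖ ^ 2 < h j then h j - s * ‖u‖ ^ 2 else 0 :=
    fun j => by
      split_ifs with hj
      · exact max_eq_left (by linarith)
      · exact max_eq_right (by linarith)
  rw [sum_congr rfl fun j _ => hmax j, ← sum_filter]
  set A := univ.filter fun j => s * ‖u‖ ^ 2 < h j
  rcases A.eq_empty_or_nonempty with hA | hA
  · rw [hA, sum_empty]; positivity
  have hA1 : (1 : ℝ) ≤ #A := by exact_mod_cast hA.card_pos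
  have hT : 0 ≤ ∑ j ∈ A, h j := sum_nonneg fun j _ => heavyMass_nonneg _ _ _
  have hs0 : 0 ≤ s := by linarith [div_nonneg hc hθ.le]
  have hTA : (∑ j ∈ A, h j) * (1 - s / 2) ≤ ‖u‖ ^ 2 := by
    have := sum_heavyMass_mul_le u hB hc hθ A
    nlinarith [mul_le_mul_of_nonneg_left hcθ hT]
  have hT2 : ∑ j ∈ A, h j ≤ 2 * ‖u‖ ^ 2 := by nlinarith [mul_le_mul_of_nonneg_left hs hT]
  rw [sum_sub_distrib, sum_const, nsmul_eq_mul]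
  nlinarith [mul_le_mul_of_nonneg_right hA1 (by positivity : 0 ≤ s * ‖u‖ ^ 2),
    mul_le_mul_of_nonneg_left hT2 hs0]

end Heavy

theorem Matrix.PosSemidef.exists_re_dotProduct_mulVec_eq_sum {𝕜 ι : Type*} [RCLike 𝕜] [Fintype ι]
    {ρ : Matrix ι ι 𝕜} (hρ : ρ.PosSemidef) :
    ∃ (N : ℕ) (u : Fin N → EuclideanSpace 𝕜 ι),
      (∀ v : EuclideanSpace 𝕜 ι, RCLike.re (star v.ofLp ⬝ᵥ ρ *ᵥ v.ofLp) = ∑ i, ‖⟪v, u i⟫_𝕜‖ ^ 2) ∧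
        RCLike.re ρ.trace = ∑ i, ‖u i‖ ^ 2 := by
  obtain ⟨N, w, rfl⟩ := Matrix.posSemidef_iff_eq_sum_vecMulVec.1 hρ
  refine ⟨N, fun i => WithLp.toLp 2 (w i), fun v => ?_, ?_⟩
  · simp only [sum_mulVec, dotProduct_sum, vecMulVec_mulVec, map_sum]
    refine sum_congr rfl fun i _ => ?_
    rw [op_smul_eq_smul, dotProduct_smul, smul_eq_mul, dotProduct_comm (star _),
      dotProduct_comm (star _)]
    change RCLike.re (⟪WithLp.toLp 2 (w i), v⟫_𝕜 * ⟪v, WithLp.toLp 2 (w i)⟫_𝕜) = _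
    rw [← inner_conj_symm, RCLike.conj_mul, ← RCLike.ofReal_pow, RCLike.ofReal_re]
  · simp only [trace_sum, trace_vecMulVec, map_sum]
    refine sum_congr rfl fun i _ => ?_
    exact inner_self_eq_norm_sq (𝕜 := 𝕜) (WithLp.toLp 2 (w i))

section FlatCouplingOfState

variable {𝕜 E ι κ : Type*} [RCLike 𝕜] [Fintype ι] [DecidableEq ι] [Fintype κ] [DecidableEq κ]
  [Nonempty κ]

theorem exists_isFlatCoupling_of_pure [NormedAddCommGroup E] [InnerProductSpace 𝕜 E]
    (B : κ → OrthonormalBasis ι 𝕜 E) {c s : ℝ}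
    (hB : ∀ j k, j ≠ k → ∀ x y, ‖⟪B j x, B k y⟫_𝕜‖ ≤ c) (hc : 0 < c) (hs0 : 0 < s) (hs1 : s ≤ 1)
    (u : E) :
    ∃ R : κ → ℝ, ∑ j, R j = ‖u‖ ^ 2 ∧ ∀ j, ∃ P, IsFlatCoupling (fun x => ‖⟪B j x, u⟫_𝕜‖ ^ 2) R j
      (2 * (s * ‖u‖ ^ 2)) (2 * (c / s ^ 2)) P := by
  set θ := 2 * c / s
  have hθ : 0 < θ := by positivity
  have hcθ : c / θ ≤ s / 2 := le_of_eq (by simp only [θ]; field_simp)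
  obtain ⟨R, hwR, hR⟩ := exists_le_of_sum_le (sum_max_heavyMass_sub_le u hB hc.le hθ hcθ hs1)
  refine ⟨R, hR, fun j => exists_isFlatCoupling (fun x => by positivity)
    (fun j' => (le_max_right _ _).trans (hwR j')) (by rw [hR, (B j).sum_sq_norm_inner_right])
    j (heavySet (B j) u (θ * ‖u‖ ^ 2)) (by positivity) (by positivity) (fun x hx => ?_)
    ((le_max_left _ _).trans (hwR j))⟩
  have : θ * ‖u‖ ^ 2 = 2 * (c / s ^ 2) * (s * ‖u‖ ^ 2) := by simp only [θ]; field_simp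
  simpa [heavySet, this] using hx

theorem exists_isFlatCoupling_of_posSemidef (B : κ → OrthonormalBasis ι 𝕜 (EuclideanSpace 𝕜 ι))
    {c s : ℝ} (hB : ∀ j k, j ≠ k → ∀ x y, ‖⟪B j x, B k y⟫_𝕜‖ ≤ c) (hc : 0 < c) (hs0 : 0 < s)
    (hs1 : s ≤ 1) {ρ : Matrix ι ι 𝕜} (hρ : ρ.PosSemidef) (htr : ρ.trace = 1) :
    ∃ R : κ → ℝ, ∑ j, R j = 1 ∧ ∀ j, ∃ P,
      IsFlatCoupling (fun x => RCLike.re (star (B j x).ofLp ⬝ᵥ ρ *ᵥ (B j x).ofLp)) R j (2 * s)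
        (2 * (c / s ^ 2)) P := by
  obtain ⟨N, u, hρu, htru⟩ := hρ.exists_re_dotProduct_mulVec_eq_sum
  have hu : ∑ i, ‖u i‖ ^ 2 = 1 := by rw [← htru, htr, RCLike.one_re]
  choose R hR P hP using fun i => exists_isFlatCoupling_of_pure B hB hc hs0 hs1 (u i)
  refine ⟨∑ i, R i, ?_, fun j => ⟨∑ i, P i j, ?_⟩⟩
  · simp only [Finset.sum_apply]
    rw [sum_comm]
    simp only [hR, hu]
  · have hsum := IsFlatCoupling.sum (s := univ) fun i _ => hP i j
    have hq : ∑ i, (fun x => ‖⟪B j x, u i⟫_𝕜‖ ^ 2) =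
        fun x => RCLike.re (star (B j x).ofLp ⬝ᵥ ρ *ᵥ (B j x).ofLp) := by
      funext x; simp only [Finset.sum_apply, hρu]
    rwa [hq, ← mul_sum, ← mul_sum, hu, mul_one] at hsum

end FlatCouplingOfState

theorem OrthonormalBasis.pos_of_norm_inner_le {𝕜 E ι : Type*} [RCLike 𝕜] [NormedAddCommGroup E]
    [InnerProductSpace 𝕜 E] [Fintype ι] [Nonempty ι] (b b' : OrthonormalBasis ι 𝕜 E) {c : ℝ}
    (hc : ∀ x y, ‖⟪b x, b' y⟫_𝕜‖ ≤ c) : 0 < c := by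
  let y : ι := Classical.arbitrary ι
  by_contra! hc0
  have h := b.sum_sq_norm_inner_right (b' y)
  rw [sum_eq_zero fun x _ => by rw [le_antisymm ((hc x y).trans hc0) (norm_nonneg _)]; simp,
    b'.orthonormal.1 y] at h
  norm_num at h

theorem two_rpow_neg_logOverlap_half_sub {n : ℕ} (hn : n ≠ 0) {c : ℝ} (hc : 0 < c) (ε : ℝ) :
    (2 : ℝ) ^ (-((logOverlap n c / 2 - 2 * ε) * n)) = c / ((2 : ℝ) ^ (-(ε * n))) ^ 2 := by
  have hδ : logOverlap n c * n = -(2 * Real.logb 2 c) := by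
    rw [logOverlap, Real.logb_pow]
    field_simp
    push_cast
    ring
  have hexp : -((logOverlap n c / 2 - 2 * ε) * n) = Real.logb 2 c - (-(ε * n)) * 2 := by
    linear_combination (-1 / 2 : ℝ) * hδ
  rw [hexp, Real.rpow_sub two_pos, Real.rpow_logb two_pos (by norm_num) hc,
    Real.rpow_mul zero_le_two]
  norm_cast

/-- Theorem 5 (all-but-one entropic uncertainty relation): for any density matrix `ρ`
on n qubits, any distribution `PJ` of the measurement choice `J`, and any
`0 < ε < δ/4`, there is a joint distribution `p` of `(J, J', X, Ψ)` such that: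
the marginal of `(J, X)` is `PJ j · Q^j(x)`; `J` and `J'` are independent;
`Pr[Ψ] ≥ 1 - 2·2^{-εn}`; and for all `j ≠ j'` with `Pr[J=j, J'=j', Ψ] > 0`,
`max_x Pr[X=x | J=j, J'=j', Ψ] ≤ 2·2^{-(δ/2-2ε)n}`. -/
theorem stmt5 {n m : ℕ} (hm : 2 ≤ m)
    (B : Fin m → OrthonormalBasis (Fin n → Bool) ℂ (EuclideanSpace ℂ (Fin n → Bool)))
    (c : ℝ)
    (hc : ∀ j k : Fin m, j < k → ∀ x y, ‖(inner ℂ (B j x) (B k y) : ℂ)‖ ≤ c)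
    (ρ : Matrix (Fin n → Bool) (Fin n → Bool) ℂ)
    (hρ : ρ.PosSemidef) (htr : ρ.trace = 1)
    (PJ : Fin m → ℝ) (hPJ : ∀ j, 0 ≤ PJ j) (hPJ1 : ∑ j, PJ j = 1)
    (ε : ℝ) (hε0 : 0 < ε) (hε : ε < logOverlap n c / 4) :
    ∃ p : Fin m → Fin m → (Fin n → Bool) → Bool → ℝ,
      -- `p` is a probability distribution on (J, J', X, Ψ)
      (∀ j j' x ψ, 0 ≤ p j j' x ψ) ∧
      (∑ j, ∑ j', ∑ x, ∑ ψ, p j j' x ψ) = 1 ∧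
      -- (1) the marginal of (J, X) is the prescribed one
      (∀ j x, ∑ j', ∑ ψ, p j j' x ψ = PJ j * outcomeProb B ρ j x) ∧
      -- (2) J and J' are independent
      (∀ j j', ∑ x, ∑ ψ, p j j' x ψ = PJ j * ∑ j₀, ∑ x, ∑ ψ, p j₀ j' x ψ) ∧
      -- (3) Pr[Ψ] ≥ 1 - 2·2^{-εn}
      (1 - 2 * (2 : ℝ) ^ (-(ε * (n : ℝ))) ≤ ∑ j, ∑ j', ∑ x, p j j' x true) ∧
      -- (4) min-entropy bound whenever j ≠ j' and Pr[J=j, J'=j', Ψ] > 0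
      (∀ j j', j ≠ j' → (0 < ∑ x, p j j' x true) →
        ∀ x, p j j' x true ≤
          2 * (2 : ℝ) ^ (-((logOverlap n c / 2 - 2 * ε) * (n : ℝ))) *
            ∑ x', p j j' x' true) := by
  have hB : ∀ j k, j ≠ k → ∀ x y, ‖⟪B j x, B k y⟫_ℂ‖ ≤ c := fun j k hjk x y => by
    rcases hjk.lt_or_gt with h | h
    · exact hc j k h x y
    · rw [norm_inner_symm]
      exact hc k j h y x
  have : Nonempty (Fin m) := ⟨⟨0, by omega⟩⟩
  have hc0 : 0 < c := (B ⟨0, by omega⟩).pos_of_norm_inner_le (B ⟨1, by omega⟩)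
    (hB _ _ (by simp [Fin.ext_iff]))
  have hn : n ≠ 0 := by
    rintro rfl
    have : logOverlap 0 c = 0 := by simp [logOverlap]
    linarith
  have hs1 : (2 : ℝ) ^ (-(ε * n)) ≤ 1 :=
    Real.rpow_le_one_of_one_le_of_nonpos one_le_two (by simp only [neg_nonpos]; positivity)
  obtain ⟨R, hR, hP⟩ :=
    exists_isFlatCoupling_of_posSemidef B hB hc0 (by positivity) hs1 hρ htr
  choose P hP using hP
  obtain ⟨p, hp0, hp1, hJX, hJJ', hΨ, hflat⟩ := exists_joint_of_isFlatCoupling hPJ hPJ1 hR hP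
  rw [two_rpow_neg_logOverlap_half_sub hn hc0]
  exact ⟨p, hp0, hp1, hJX, hJJ', hΨ, fun j j' hjj' _ => hflat j j' hjj'⟩
end

section
/- Let 𝒳 be a finite set, let (J,X) be a pair of random variables with joint distribution P_{JX} on {1,…,m} × 𝒳 such that P_J(j) > 0 for every j, and let ℰ ⊆ {1,…,m} × 𝒳 be an event such that Σ_{j=1}^m Pr[ℰ | J=j] = m − 1. Then there exists a joint distribution of (J, J', X) on {1,…,m} × {1,…,m} × 𝒳 whose marginal on (J,X) equals P_{JX} and such that: (1) J and J' are independent; (2) the event J ≠ J' coincides with ℰ, i.e., Pr[J' ≠ J | J=j, X=x] = 1 whenever (j,x) ∈ ℰ and P_{JX}(j,x) > 0, and Pr[J' ≠ J | J=j, X=x] = 0 whenever (j,x) ∉ ℰ and P_{JX}(j,x) > 0; (3) the marginal of J' satisfies P_{J'}(j') = Pr[¬ℰ | J=j'] for all j'; and (4) conditioned on ℰ, X ↔ J ↔ J' forms a Markov chain (i.e., given ℰ and J, the variables X and J' are conditionally independent). -/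
/-!
Write `A j' = Pr[¬E | J = j']`. The hypothesis on `E` says exactly that `∑ j', A j' = 1`, so `A`
is a distribution, and it is the one `J'` must have. Given `(J, X) = (j, x)`, set `J' = j` off `E`,
and on `E` draw `J'` from `A` conditioned on `J' ≠ j`. Then `Pr[J = j, J' = j'] = P_J(j) A j'`:
for `j' = j` this is `Pr[J = j, ¬E]`, and for `j' ≠ j` it is
`Pr[J = j, E] · A j' / (1 - A j) = P_J(j) A j'`. When `A j = 1` the conditioning is undefined,
but then `Pr[J = j, E] = 0` and every other `A j'` vanishes, so nothing is lost.
-/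

open Finset

namespace VirtualGuess

section CondNe

variable {ι : Type*} {a : ι → ℝ}

lemma le_one_of_sum_eq_one [Fintype ι] (ha : ∀ j, 0 ≤ a j) (hsum : ∑ j, a j = 1) (i : ι) :
    a i ≤ 1 :=
  hsum ▸ single_le_sum (fun j _ => ha j) (mem_univ i)

variable [DecidableEq ι]

/-- The distribution `a` conditioned on avoiding `i` (junk when `a i = 1`). -/
noncomputable def condNe (a : ι → ℝ) (i j : ι) : ℝ :=
  if j = i then 0 else a j / (1 - a i)

@[simp]
lemma condNe_self (a : ι → ℝ) (i : ι) : condNe a i i = 0 := if_pos rfl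

variable [Fintype ι]

lemma sum_ite_eq_zero_eq_sub (a : ι → ℝ) (i : ι) :
    ∑ j, (if j = i then 0 else a j) = ∑ j, a j - a i := by
  rw [sum_ite, sum_const_zero, zero_add, filter_ne', sum_erase_eq_sub (mem_univ i)]

lemma eq_zero_of_eq_one_of_ne (ha : ∀ j, 0 ≤ a j) (hsum : ∑ j, a j = 1) {i j : ι}
    (hi : a i = 1) (hji : j ≠ i) : a j = 0 := by
  have hrest : ∑ k ∈ univ.erase i, a k = 0 := by
    rw [sum_erase_eq_sub (mem_univ i), hsum, hi, sub_self]
  exact (sum_eq_zero_iff_of_nonneg fun k _ => ha k).mp hrest j (mem_erase.mpr ⟨hji, mem_univ j⟩)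

lemma condNe_nonneg (ha : ∀ j, 0 ≤ a j) (hsum : ∑ j, a j = 1) (i j : ι) :
    0 ≤ condNe a i j := by
  unfold condNe
  split_ifs
  · exact le_rfl
  · exact div_nonneg (ha j) (sub_nonneg.mpr (le_one_of_sum_eq_one ha hsum i))

lemma one_sub_mul_condNe (ha : ∀ j, 0 ≤ a j) (hsum : ∑ j, a j = 1) (i j : ι) :
    (1 - a i) * condNe a i j = if j = i then 0 else a j := by
  unfold condNe
  split_ifs with hji
  · exact mul_zero _
  · by_cases hi : a i = 1
    · rw [hi, eq_zero_of_eq_one_of_ne ha hsum hi hji, sub_self, zero_mul]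
    · exact mul_div_cancel₀ _ (sub_ne_zero.mpr (Ne.symm hi))

lemma sum_condNe (ha : ∀ j, 0 ≤ a j) (hsum : ∑ j, a j = 1) {i : ι} (hi : a i ≠ 1) :
    ∑ j, condNe a i j = 1 := by
  have hne : 1 - a i ≠ 0 := sub_ne_zero.mpr (Ne.symm hi)
  refine mul_left_cancel₀ hne ?_
  rw [mul_sum, mul_one]
  simp_rw [one_sub_mul_condNe ha hsum i]
  rw [sum_ite_eq_zero_eq_sub, hsum]

end CondNe

section Construction

variable {ι 𝒳 : Type*} [Fintype 𝒳] [DecidableEq ι] [DecidableEq 𝒳]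
  (P : ι → 𝒳 → ℝ) (E : Finset (ι × 𝒳))

def probJ (j : ι) : ℝ := ∑ x, P j x

def massIn (j : ι) : ℝ := ∑ x ∈ univ.filter (fun x => (j, x) ∈ E), P j x

def massOut (j : ι) : ℝ := ∑ x ∈ univ.filter (fun x => (j, x) ∉ E), P j x

/-- `Pr[¬E | J = j]`. -/
noncomputable def condProbOut (j : ι) : ℝ := massOut P E j / probJ P j

noncomputable def virtualGuess (j j' : ι) (x : 𝒳) : ℝ :=
  if (j, x) ∈ E then P j x * condNe (condProbOut P E) j j' else if j' = j then P j x else 0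

variable {P E}

lemma massIn_add_massOut (j : ι) : massIn P E j + massOut P E j = probJ P j :=
  sum_filter_add_sum_filter_not _ _ _

lemma massIn_eq_mul_one_sub (hPJ : ∀ j, 0 < probJ P j) (j : ι) :
    massIn P E j = probJ P j * (1 - condProbOut P E j) := by
  rw [condProbOut, mul_sub, mul_one, mul_div_cancel₀ _ (hPJ j).ne', ← massIn_add_massOut]
  ring

lemma condProbOut_nonneg (hP : ∀ j x, 0 ≤ P j x) (hPJ : ∀ j, 0 < probJ P j) (j : ι) :
    0 ≤ condProbOut P E j :=
  div_nonneg (sum_nonneg fun x _ => hP j x) (hPJ j).le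

lemma sum_condProbOut [Fintype ι] (hPJ : ∀ j, 0 < probJ P j)
    (hE : ∑ j, massIn P E j / probJ P j = (Fintype.card ι : ℝ) - 1) :
    ∑ j, condProbOut P E j = 1 := by
  have hcompl : ∀ j, condProbOut P E j = 1 - massIn P E j / probJ P j := fun j => by
    rw [eq_sub_iff_add_eq, condProbOut, ← add_div, add_comm, massIn_add_massOut,
      div_self (hPJ j).ne']
  simp_rw [hcompl]
  rw [sum_sub_distrib, hE, sum_const, card_univ, nsmul_one]
  ring

lemma virtualGuess_mul_massIn {j : ι} {x : 𝒳} (hx : (j, x) ∈ E) (j' : ι) :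
    virtualGuess P E j j' x * massIn P E j =
      P j x * ∑ x' ∈ univ.filter (fun x' => (j, x') ∈ E), virtualGuess P E j j' x' := by
  have hon : ∀ x' ∈ univ.filter (fun x' => (j, x') ∈ E),
      virtualGuess P E j j' x' = P j x' * condNe (condProbOut P E) j j' :=
    fun x' hx' => if_pos (mem_filter.mp hx').2
  rw [sum_congr rfl hon, ← sum_mul, hon x (by simpa using hx), massIn]
  ring

variable [Fintype ι]

lemma virtualGuess_nonneg (hP : ∀ j x, 0 ≤ P j x) (hPJ : ∀ j, 0 < probJ P j)
    (hA : ∑ j, condProbOut P E j = 1) (j j' : ι) (x : 𝒳) : 0 ≤ virtualGuess P E j j' x := by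
  unfold virtualGuess
  split_ifs
  · exact mul_nonneg (hP j x) (condNe_nonneg (condProbOut_nonneg hP hPJ) hA j j')
  · exact hP j x
  · exact le_rfl

lemma sum_guess_virtualGuess (hP : ∀ j x, 0 ≤ P j x) (hPJ : ∀ j, 0 < probJ P j)
    (hA : ∑ j, condProbOut P E j = 1) (j : ι) (x : 𝒳) :
    ∑ j', virtualGuess P E j j' x = P j x := by
  unfold virtualGuess
  by_cases hx : (j, x) ∈ E
  · simp only [hx, if_true, ← mul_sum]
    by_cases hAj : condProbOut P E j = 1
    · have hPx : P j x ≤ massIn P E j := single_le_sum (fun y _ => hP j y) (by simp [hx])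
      rw [massIn_eq_mul_one_sub hPJ, hAj, sub_self, mul_zero] at hPx
      rw [le_antisymm hPx (hP j x), zero_mul]
    · rw [sum_condNe (condProbOut_nonneg hP hPJ) hA hAj, mul_one]
  · simp [hx]

lemma sum_obs_virtualGuess (hP : ∀ j x, 0 ≤ P j x) (hPJ : ∀ j, 0 < probJ P j)
    (hA : ∑ j, condProbOut P E j = 1) (j j' : ι) :
    ∑ x, virtualGuess P E j j' x = probJ P j * condProbOut P E j' := by
  have hsplit : ∑ x, virtualGuess P E j j' x =
      massIn P E j * condNe (condProbOut P E) j j' + if j' = j then massOut P E j else 0 := by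
    unfold virtualGuess massIn massOut
    rw [sum_ite, sum_mul]
    split_ifs <;> simp
  rw [hsplit, massIn_eq_mul_one_sub hPJ, mul_assoc,
    one_sub_mul_condNe (condProbOut_nonneg hP hPJ) hA]
  split_ifs with hj'
  · subst hj'
    rw [condProbOut, mul_div_cancel₀ _ (hPJ j').ne', mul_zero, zero_add]
  · rw [add_zero]

lemma sum_sum_virtualGuess (hP : ∀ j x, 0 ≤ P j x) (hPJ : ∀ j, 0 < probJ P j)
    (hA : ∑ j, condProbOut P E j = 1) (hsum : ∑ j, probJ P j = 1) (j' : ι) :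
    ∑ j, ∑ x, virtualGuess P E j j' x = condProbOut P E j' := by
  simp_rw [sum_obs_virtualGuess hP hPJ hA, ← sum_mul, hsum, one_mul]

lemma sum_virtualGuess_ne_of_mem (hP : ∀ j x, 0 ≤ P j x) (hPJ : ∀ j, 0 < probJ P j)
    (hA : ∑ j, condProbOut P E j = 1) {j : ι} {x : 𝒳} (hx : (j, x) ∈ E) :
    ∑ j' ∈ univ.filter (fun j' => j' ≠ j), virtualGuess P E j j' x = P j x := by
  have hself : virtualGuess P E j j x = 0 := by simp [virtualGuess, hx]
  rw [filter_ne', sum_erase_eq_sub (mem_univ j), sum_guess_virtualGuess hP hPJ hA, hself,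
    sub_zero]

lemma sum_virtualGuess_ne_of_notMem {j : ι} {x : 𝒳} (hx : (j, x) ∉ E) :
    ∑ j' ∈ univ.filter (fun j' => j' ≠ j), virtualGuess P E j j' x = 0 :=
  sum_eq_zero fun j' hj' => by simp_all [virtualGuess]

end Construction

end VirtualGuess

open VirtualGuess

/-- Existence of the virtual guess `J'`: given a joint distribution `P` of `(J, X)` on
`{1,…,m} × 𝒳` with all marginals `P_J(j) > 0`, and an event `E` with
`∑ j Pr[E | J=j] = m - 1`, there is a joint distribution `q` of `(J, J', X)` whose
marginal on `(J, X)` is `P`, such that `J` and `J'` are independent, the event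
`J ≠ J'` coincides with `E`, the marginal of `J'` satisfies
`P_{J'}(j') = Pr[¬E | J=j']`, and, conditioned on `E`, `X ↔ J ↔ J'` is a Markov
chain. -/
theorem stmt6 {m : ℕ} {𝒳 : Type*} [Fintype 𝒳] [DecidableEq 𝒳]
    (P : Fin m → 𝒳 → ℝ) (hP : ∀ j x, 0 ≤ P j x)
    (hsum : ∑ j, ∑ x, P j x = 1)
    (hPJ : ∀ j, 0 < ∑ x, P j x)
    (E : Finset (Fin m × 𝒳))
    (hE : ∑ j, (∑ x ∈ Finset.univ.filter (fun x => (j, x) ∈ E), P j x) /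
            (∑ x, P j x) = (m : ℝ) - 1) :
    ∃ q : Fin m → Fin m → 𝒳 → ℝ,
      (∀ j j' x, 0 ≤ q j j' x) ∧
      -- the marginal on (J, X) is P
      (∀ j x, ∑ j', q j j' x = P j x) ∧
      -- (1) J and J' are independent
      (∀ j j', ∑ x, q j j' x = (∑ x, P j x) * (∑ j₀, ∑ x, q j₀ j' x)) ∧
      -- (2) the event J ≠ J' coincides with E
      (∀ j x, (j, x) ∈ E → 0 < P j x →
        ∑ j' ∈ Finset.univ.filter (fun j' => j' ≠ j), q j j' x = P j x) ∧
      (∀ j x, (j, x) ∉ E → 0 < P j x →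
        ∑ j' ∈ Finset.univ.filter (fun j' => j' ≠ j), q j j' x = 0) ∧
      -- (3) the marginal of J' is j' ↦ Pr[¬E | J = j']
      (∀ j', ∑ j, ∑ x, q j j' x =
        (∑ x ∈ Finset.univ.filter (fun x => (j', x) ∉ E), P j' x) /
          (∑ x, P j' x)) ∧
      -- (4) conditioned on E, X ↔ J ↔ J' is a Markov chain
      (∀ j j' x, (j, x) ∈ E →
        q j j' x * (∑ x' ∈ Finset.univ.filter (fun x' => (j, x') ∈ E), P j x') =
          P j x * (∑ x' ∈ Finset.univ.filter (fun x' => (j, x') ∈ E), q j j' x')) := by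
  have hA : ∑ j, condProbOut P E j = 1 := sum_condProbOut hPJ (by rwa [Fintype.card_fin])
  refine ⟨virtualGuess P E, virtualGuess_nonneg hP hPJ hA, sum_guess_virtualGuess hP hPJ hA,
    fun j j' => ?_, fun j x hx _ => sum_virtualGuess_ne_of_mem hP hPJ hA hx,
    fun j x hx _ => sum_virtualGuess_ne_of_notMem hx, sum_sum_virtualGuess hP hPJ hA hsum,
    fun j j' x hx => virtualGuess_mul_massIn hx j'⟩
  rw [sum_obs_virtualGuess hP hPJ hA, sum_sum_virtualGuess hP hPJ hA hsum]
  rfl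
end

section
/- Let n, k and ℓ be positive integers, let 0 < β < 1/4, and let I ⊆ {1,…,n} with |I| ≥ k. Let F be drawn uniformly at random from the set of ℓ×n matrices over 𝔽₂. Then, except with probability at most 2^{2ℓ}·exp(−2kβ²) over the choice of F, it holds that |(f ⊙ g)_I| > (1/4 − β)·k for all f, g ∈ span(F)\{0}. -/
/-!
For fixed nonzero `s, t`, the columns `c` of `F` are independent uniform vectors of `𝔽₂^ℓ`, and
column `i` contributes to `|(sF ⊙ tF)_I|` iff `s ⬝ c = t ⬝ c = 1`. The linear map
`c ↦ (s ⬝ c, t ⬝ c)` hits `(1, 1)`, and all its nonempty fibres have the same size, so this happens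
with probability at least `1/4`. Hoeffding's inequality over `k` columns of `I` bounds the
probability of at most `(1/4 - β) k` such columns by `exp (-2 k β²)`, and a union bound over the
at most `2^{2ℓ}` pairs `(s, t)` finishes the proof.
-/

open Finset MeasureTheory ProbabilityTheory Real

theorem AddMonoidHom.card_le_card_mul_card_fiber {G M : Type*} [AddGroup G] [Fintype G]
    [AddMonoid M] [Fintype M] [DecidableEq M] (f : G →+ M) {y : M} (hy : y ∈ Set.range f) :
    Fintype.card G ≤ Fintype.card M * #{g | f g = y} := by
  calc Fintype.card G = ∑ x : M, #{g | f g = x} := by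
        rw [← card_univ, card_eq_sum_card_fiberwise fun g _ => mem_univ (f g)]
    _ ≤ ∑ _x : M, #{g | f g = y} := by
        refine sum_le_sum fun x _ => ?_
        by_cases hx : x ∈ Set.range f
        · exact (card_fiber_eq_of_mem_range f hx hy).le
        · rw [card_eq_zero.mpr (filter_eq_empty_iff.mpr fun g _ h => hx ⟨g, h⟩)]
          exact Nat.zero_le _
    _ = Fintype.card M * #{g | f g = y} := by rw [sum_const, card_univ, smul_eq_mul]

theorem exists_dotProduct_eq_one {K ι : Type*} [Field K] [Fintype ι] [DecidableEq ι]
    {s : ι → K} (hs : s ≠ 0) : ∃ c, s ⬝ᵥ c = 1 := by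
  obtain ⟨j, hj⟩ := Function.ne_iff.mp hs
  exact ⟨Pi.single j (s j)⁻¹, by simpa [dotProduct_single] using mul_inv_cancel₀ hj⟩

theorem exists_dotProduct_eq_one_and_eq_one {ι : Type*} [Fintype ι] [DecidableEq ι]
    {s t : ι → ZMod 2} (hs : s ≠ 0) (ht : t ≠ 0) : ∃ c, s ⬝ᵥ c = 1 ∧ t ⬝ᵥ c = 1 := by
  obtain ⟨c, hc⟩ := exists_dotProduct_eq_one hs
  obtain ⟨d, hd⟩ := exists_dotProduct_eq_one ht
  by_cases htc : t ⬝ᵥ c = 1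
  · exact ⟨c, hc, htc⟩
  by_cases hsd : s ⬝ᵥ d = 1
  · exact ⟨d, hsd, hd⟩
  have h_eq_zero : ∀ a : ZMod 2, a ≠ 1 → a = 0 := by decide
  refine ⟨c + d, ?_, ?_⟩ <;> simp [dotProduct_add, hc, hd, h_eq_zero _ htc, h_eq_zero _ hsd]

theorem card_le_four_mul_card_dotProduct_mul_eq_one {ι : Type*} [Fintype ι] [DecidableEq ι]
    {s t : ι → ZMod 2} (hs : s ≠ 0) (ht : t ≠ 0) :
    Fintype.card (ι → ZMod 2) ≤ 4 * #{c | s ⬝ᵥ c * t ⬝ᵥ c = 1} := by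
  let f : (ι → ZMod 2) →+ ZMod 2 × ZMod 2 :=
    AddMonoidHom.mk' (fun c => (s ⬝ᵥ c, t ⬝ᵥ c)) fun c d => by simp [dotProduct_add]
  obtain ⟨c, hc⟩ := exists_dotProduct_eq_one_and_eq_one hs ht
  have h_mul_eq_one : ∀ a b : ZMod 2, a * b = 1 ↔ a = 1 ∧ b = 1 := by decide
  simpa [f, h_mul_eq_one] using f.card_le_card_mul_card_fiber (y := (1, 1)) ⟨c, by simp [f, hc]⟩

theorem measureReal_uniformOn_univ {Ω : Type*} [Fintype Ω] [MeasurableSpace Ω]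
    [MeasurableSingletonClass Ω] (p : Ω → Prop) :
    (uniformOn (Set.univ : Set Ω)).real {x | p x} = Nat.card {x // p x} / Fintype.card Ω := by
  rw [measureReal_def, uniformOn_univ, Measure.count_apply_finite _ (Set.toFinite _),
    ENNReal.toReal_div, ← Nat.card_eq_card_finite_toFinset]
  simp only [ENNReal.toReal_natCast]
  rfl

section Hoeffding

variable {ι α : Type*} [Fintype ι] [Fintype α] [Nonempty α] [MeasurableSpace α]
  [MeasurableSingletonClass α]

theorem measureReal_card_filter_mem_le_le_exp (G : Set α) [DecidablePred (· ∈ G)]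
    (J : Finset ι) {p β : ℝ} (hp : p ≤ (uniformOn (Set.univ : Set α)).real G) (hβ : 0 ≤ β) :
    (uniformOn (Set.univ : Set (ι → α))).real
        {g | (#{i ∈ J | g i ∈ G} : ℝ) ≤ (p - β) * #J} ≤ exp (-(2 * #J * β ^ 2)) := by
  set ν := uniformOn (Set.univ : Set α)
  set Y : α → ℝ := fun a => ν.real G - G.indicator 1 a
  have hpi : uniformOn (Set.univ : Set (ι → α)) = Measure.pi fun _ => ν := by
    rw [← uniformOn_pi, Set.pi_univ]
  have hindep : iIndepFun (fun (i : ι) (g : ι → α) => Y (g i)) (Measure.pi fun _ => ν) :=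
    iIndepFun_pi fun _ => (measurable_of_finite Y).aemeasurable
  have hY : HasSubgaussianMGF Y ((‖(1 : ℝ) - 0‖₊ / 2) ^ 2) ν := by
    have h01 : ∀ a, G.indicator (1 : α → ℝ) a ∈ Set.Icc 0 1 := fun a => by
      by_cases h : a ∈ G <;> simp [h]
    convert (hasSubgaussianMGF_of_mem_Icc (measurable_of_finite _).aemeasurable
      (ae_of_all ν h01)).neg using 1
    ext a
    simp [Y, integral_indicator_one G.toFinite.measurableSet]
  have hsub : ∀ i ∈ J, HasSubgaussianMGF (fun g : ι → α => Y (g i))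
      ((‖(1 : ℝ) - 0‖₊ / 2) ^ 2) (Measure.pi fun _ => ν) := fun i _ =>
    HasSubgaussianMGF.of_map (X := Y) (Y := fun g : ι → α => g i)
      (measurable_pi_apply i).aemeasurable
      (by rw [(measurePreserving_eval (fun _ => ν) i).map_eq]; exact hY)
  have hsum : ∀ g : ι → α, ∑ i ∈ J, Y (g i) = ν.real G * #J - #{i ∈ J | g i ∈ G} := by
    intro g
    simp [Y, sum_sub_distrib, Set.indicator_apply, sum_boole, mul_comm]
  have hexp : -(β * #J) ^ 2 / (2 * ((∑ _i ∈ J, (‖(1 : ℝ) - 0‖₊ / 2) ^ 2 : NNReal) : ℝ))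
      = -(2 * #J * β ^ 2) := by
    rcases J.eq_empty_or_nonempty with rfl | hJ
    · simp
    · simp only [sub_zero, nnnorm_one, one_div, inv_pow, sum_const, nsmul_eq_mul,
        NNReal.coe_mul, NNReal.coe_natCast, NNReal.coe_inv, NNReal.coe_pow, NNReal.coe_ofNat]
      field_simp
  rw [hpi, ← hexp]
  refine le_trans (measureReal_mono fun g hg => ?_)
    (HasSubgaussianMGF.measure_sum_ge_le_of_iIndepFun hindep hsub (by positivity))
  simp only [Set.mem_ofPred_eq, hsum] at hg ⊢
  nlinarith [Nat.cast_nonneg (α := ℝ) #J]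

end Hoeffding

section RandomColumns

variable {ι κ : Type*} [Fintype ι] [Fintype κ] [DecidableEq κ]

theorem measureReal_card_filter_dotProduct_mul_eq_one_le {s t : κ → ZMod 2} (hs : s ≠ 0)
    (ht : t ≠ 0) (J : Finset ι) {β : ℝ} (hβ : 0 ≤ β) :
    (uniformOn (Set.univ : Set (ι → κ → ZMod 2))).real
        {g | (#{i ∈ J | s ⬝ᵥ g i * t ⬝ᵥ g i = 1} : ℝ) ≤ (1 / 4 - β) * #J} ≤
      exp (-(2 * #J * β ^ 2)) := by
  refine measureReal_card_filter_mem_le_le_exp {c | s ⬝ᵥ c * t ⬝ᵥ c = 1} J ?_ hβ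
  have hcard : (Fintype.card (κ → ZMod 2) : ℝ) ≤ 4 * #{c | s ⬝ᵥ c * t ⬝ᵥ c = 1} := by
    exact_mod_cast card_le_four_mul_card_dotProduct_mul_eq_one hs ht
  rw [measureReal_uniformOn_univ (fun c => s ⬝ᵥ c * t ⬝ᵥ c = 1), le_div_iff₀ (by positivity),
    Nat.card_eq_fintype_card, Fintype.card_subtype]
  linarith

theorem measureReal_exists_card_filter_dotProduct_mul_eq_one_le (J : Finset ι) {β : ℝ}
    (hβ : 0 ≤ β) :
    (uniformOn (Set.univ : Set (ι → κ → ZMod 2))).real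
        {g | ∃ s t : κ → ZMod 2, s ≠ 0 ∧ t ≠ 0 ∧
          (#{i ∈ J | s ⬝ᵥ g i * t ⬝ᵥ g i = 1} : ℝ) ≤ (1 / 4 - β) * #J} ≤
      2 ^ (2 * Fintype.card κ) * exp (-(2 * #J * β ^ 2)) := by
  let bad (q : (κ → ZMod 2) × (κ → ZMod 2)) : Set (ι → κ → ZMod 2) :=
    {g | q.1 ≠ 0 ∧ q.2 ≠ 0 ∧ (#{i ∈ J | q.1 ⬝ᵥ g i * q.2 ⬝ᵥ g i = 1} : ℝ) ≤ (1 / 4 - β) * #J}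
  have hbad : ∀ q, (uniformOn Set.univ).real (bad q) ≤ exp (-(2 * #J * β ^ 2)) := by
    rintro ⟨s, t⟩
    by_cases hst : s ≠ 0 ∧ t ≠ 0
    · exact (measureReal_mono fun g hg => hg.2.2).trans
        (measureReal_card_filter_dotProduct_mul_eq_one_le hst.1 hst.2 J hβ)
    · have : bad (s, t) = ∅ := Set.eq_empty_of_forall_notMem fun g hg => hst ⟨hg.1, hg.2.1⟩
      rw [this, measureReal_empty]
      positivity
  calc _ = (uniformOn Set.univ).real (⋃ q, bad q) := by
        congr 1
        ext g
        simp [bad]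
    _ ≤ ∑ q, (uniformOn Set.univ).real (bad q) := measureReal_iUnion_fintype_le _
    _ ≤ ∑ _q : (κ → ZMod 2) × (κ → ZMod 2), exp (-(2 * #J * β ^ 2)) := sum_le_sum fun q _ => hbad q
    _ = 2 ^ (2 * Fintype.card κ) * exp (-(2 * #J * β ^ 2)) := by
        simp [two_mul, pow_add]

end RandomColumns

theorem stmt12_general (n k l : ℕ)
    (β : ℝ) (hβ0 : 0 < β)
    (I : Finset (Fin n)) (hI : k ≤ I.card) :
    (Nat.card {F : Matrix (Fin l) (Fin n) (ZMod 2) //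
        ¬ ∀ s t : Fin l → ZMod 2,
            Matrix.vecMul s F ≠ 0 → Matrix.vecMul t F ≠ 0 →
            ((1 : ℝ) / 4 - β) * k <
              ((I.filter (fun i =>
                Matrix.vecMul s F i * Matrix.vecMul t F i = 1)).card : ℝ)} : ℝ)
      / 2 ^ (l * n)
    ≤ 2 ^ (2 * l) * Real.exp (-(2 * k * β ^ 2)) := by
  obtain ⟨J, hJI, rfl⟩ := exists_subset_card_eq hI
  let columns : (Fin n → Fin l → ZMod 2) ≃ Matrix (Fin l) (Fin n) (ZMod 2) :=
    (Equiv.piComm _).trans Matrix.of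
  have hcard : (Fintype.card (Fin n → Fin l → ZMod 2) : ℝ) = 2 ^ (l * n) := by
    simp [pow_mul]
  rw [← Nat.card_congr (columns.subtypeEquiv fun _ => Iff.rfl), ← hcard,
    ← measureReal_uniformOn_univ]
  refine le_trans (measureReal_mono ?_ (measure_ne_top _ _))
    ((measureReal_exists_card_filter_dotProduct_mul_eq_one_le J hβ0.le).trans_eq
      (by rw [Fintype.card_fin]))
  intro g hg
  push Not at hg
  obtain ⟨s, t, hs, ht, hle⟩ := hg
  refine ⟨s, t, fun h => hs (by simp [h]), fun h => ht (by simp [h]), le_trans ?_ hle⟩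
  exact_mod_cast card_le_card (filter_subset_filter _ hJI)

/-- Lemma 12: for `I ⊆ {1,…,n}` with `|I| ≥ k` and a uniformly random `ℓ×n` matrix
`F` over 𝔽₂, except with probability at most `2^{2ℓ}·exp(−2kβ²)` it holds that
`|(f ⊙ g)_I| > (1/4 − β)·k` for all nonzero `f, g` in the row span of `F`.
The probability is expressed as (number of bad matrices) / 2^{ℓn}. -/
theorem stmt12 (n k l : ℕ) (hn : 0 < n) (hk : 0 < k) (hl : 0 < l)
    (β : ℝ) (hβ0 : 0 < β) (hβ : β < 1 / 4)
    (I : Finset (Fin n)) (hI : k ≤ I.card) :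
    (Nat.card {F : Matrix (Fin l) (Fin n) (ZMod 2) //
        ¬ ∀ s t : Fin l → ZMod 2,
            Matrix.vecMul s F ≠ 0 → Matrix.vecMul t F ≠ 0 →
            ((1 : ℝ) / 4 - β) * k <
              ((I.filter (fun i =>
                Matrix.vecMul s F i * Matrix.vecMul t F i = 1)).card : ℝ)} : ℝ)
      / 2 ^ (l * n)
    ≤ 2 ^ (2 * l) * Real.exp (-(2 * k * β ^ 2)) :=
  stmt12_general n k l β hβ0 I hI
end

section
/- Let 𝒞 ⊆ {0,1}ⁿ be a binary code of size m with minimum Hamming distance d, let ℓ be a positive integer and let 0 < β < 1/4. Let F be drawn uniformly at random from the set of ℓ×n matrices over 𝔽₂. Then, except with probability at most (m choose 2)·2^{2ℓ}·exp(−2dβ²) over the choice of F, the matrix F has the following property: for every string s ∈ {0,1}ⁿ there exists at most one codeword c̃ ∈ 𝒞 for which there exists f ∈ span(F)\{0} with |f ⊙ (c̃ ⊕ s)| < (1/2)·(1/4 − β)·d; equivalently, for all other codewords c ∈ 𝒞 with c ≠ c̃, it holds that |f ⊙ (c ⊕ s)| ≥ (1/2)·(1/4 − β)·d for all f ∈ span(F)\{0}.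 -/
/-!
If two distinct codewords `c₁, c₂` are both close to `s` on the supports of nonzero
`f₁, f₂ ∈ span F`, the triangle inequality gives `|f₁ ⊙ f₂ ⊙ (c₁ ⊕ c₂)| < (1/4 - β) d`.
For fixed nonzero coefficient vectors `t₁, t₂` the columns of `F` are independent and uniform,
and a column `c` satisfies `t₁ ⬝ c = t₂ ⬝ c = 1` with probability at least `1/4`, because
`(1, 1)` lies in the image of the linear map `c ↦ (t₁ ⬝ c, t₂ ⬝ c)`. On the at least `d`
coordinates where `c₁ ⊕ c₂` is `1`, a Chernoff bound makes fewer than `(1/4 - β) d` successes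
happen for at most a fraction `exp(-2dβ²)` of the matrices; a union bound over the
`m.choose 2` pairs of codewords and the `2^{2ℓ}` pairs `(t₁, t₂)` concludes.
-/

open Finset Matrix

theorem Real.exp_neg_le_one_sub_add_sq_div_two {x : ℝ} (hx : 0 ≤ x) :
    Real.exp (-x) ≤ 1 - x + x ^ 2 / 2 := by
  have hq : 0 < 1 - x + x ^ 2 / 2 := by nlinarith [sq_nonneg (x - 1)]
  rw [Real.exp_neg, inv_le_iff_one_le_mul₀ (Real.exp_pos x)]
  -- `(1 - x + x²/2)(1 + x + x²/2) = 1 + x⁴/4`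
  nlinarith [mul_le_mul_of_nonneg_left (Real.quadratic_le_exp_of_nonneg hx) hq.le,
    pow_two_nonneg (x ^ 2)]

theorem Finset.card_filter_lt_le_sum_exp {γ : Type*} (s : Finset γ) (f : γ → ℝ) (T : ℝ)
    {t : ℝ} (ht : 0 ≤ t) : (#{x ∈ s | f x < T} : ℝ) ≤ ∑ x ∈ s, Real.exp (t * (T - f x)) := by
  rw [card_eq_sum_ones, Nat.cast_sum, Nat.cast_one]
  calc ∑ x ∈ s with f x < T, (1 : ℝ) ≤ ∑ x ∈ s with f x < T, Real.exp (t * (T - f x)) :=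
        sum_le_sum fun x hx =>
          Real.one_le_exp (mul_nonneg ht (sub_nonneg.2 (mem_filter.1 hx).2.le))
    _ ≤ ∑ x ∈ s, Real.exp (t * (T - f x)) :=
        sum_le_sum_of_subset_of_nonneg (filter_subset _ _) fun _ _ _ => (Real.exp_pos _).le

theorem sum_ite_exp_neg_le {α : Type*} [Fintype α] (P : α → Prop) [DecidablePred P] {q t : ℝ}
    (hq : 0 ≤ q) (ht : 0 ≤ t) (hP : q * Fintype.card α ≤ #{a | P a}) :
    ∑ a, (if P a then Real.exp (-t) else 1) ≤
      Fintype.card α * Real.exp (-(q * (t - t ^ 2 / 2))) := by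
  have hsplit : ∑ a, (if P a then Real.exp (-t) else 1) =
      Fintype.card α - #{a | P a} * (1 - Real.exp (-t)) := by
    rw [sum_ite, sum_const, sum_const, nsmul_eq_mul, nsmul_one,
      ← card_univ, ← card_filter_add_card_filter_not (s := univ) P]
    push_cast
    ring
  have hgap : t - t ^ 2 / 2 ≤ 1 - Real.exp (-t) := by
    linarith [Real.exp_neg_le_one_sub_add_sq_div_two ht]
  have hgap0 : 0 ≤ 1 - Real.exp (-t) := by
    rw [sub_nonneg, Real.exp_le_one_iff]; linarith
  calc ∑ a, (if P a then Real.exp (-t) else 1)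
      ≤ Fintype.card α * (-(q * (t - t ^ 2 / 2)) + 1) := by
        rw [hsplit]
        nlinarith [mul_le_mul_of_nonneg_right hP hgap0,
          mul_le_mul_of_nonneg_left hgap (mul_nonneg hq (Nat.cast_nonneg (Fintype.card α)))]
    _ ≤ Fintype.card α * Real.exp (-(q * (t - t ^ 2 / 2))) := by
        gcongr; exact Real.add_one_le_exp _

theorem chernoff_card_filter_lt_le {ι α : Type*} [Fintype ι] [DecidableEq ι] [Fintype α]
    (P : α → Prop) [DecidablePred P] (S : Finset ι) {q β : ℝ} (hq : 0 < q) (hβ : 0 ≤ β)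
    (hP : q * Fintype.card α ≤ #{a | P a}) :
    (#{g : ι → α | (#{i ∈ S | P (g i)} : ℝ) < (q - β) * #S} : ℝ) ≤
      Fintype.card α ^ Fintype.card ι * Real.exp (-(#S * β ^ 2 / (2 * q))) := by
  set t := β / q with ht
  have ht0 : 0 ≤ t := div_nonneg hβ hq.le
  set w : ι → α → ℝ := fun i a => if i ∈ S then (if P a then Real.exp (-t) else 1) else 1
  have hexp : ∀ g : ι → α, Real.exp (t * ((q - β) * #S - #{i ∈ S | P (g i)})) =
      Real.exp (t * ((q - β) * #S)) * ∏ i, w i (g i) := by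
    intro g
    rw [prod_ite_mem, univ_inter, ← prod_filter, prod_const, ← Real.exp_nat_mul, ← Real.exp_add]
    ring_nf
  have hcol : ∀ i, ∑ a, w i a ≤
      Fintype.card α * (if i ∈ S then Real.exp (-(q * (t - t ^ 2 / 2))) else 1) := by
    intro i
    by_cases hi : i ∈ S
    · simpa [w, hi] using sum_ite_exp_neg_le P hq.le ht0 hP
    · simp [w, hi]
  calc (#{g : ι → α | (#{i ∈ S | P (g i)} : ℝ) < (q - β) * #S} : ℝ)
      ≤ ∑ g : ι → α, Real.exp (t * ((q - β) * #S - #{i ∈ S | P (g i)})) :=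
        card_filter_lt_le_sum_exp _ _ _ ht0
    _ = Real.exp (t * ((q - β) * #S)) * ∏ i, ∑ a, w i a := by
        simp_rw [hexp, ← mul_sum, Fintype.prod_sum]
    _ ≤ Real.exp (t * ((q - β) * #S)) *
          ∏ i, (Fintype.card α * (if i ∈ S then Real.exp (-(q * (t - t ^ 2 / 2))) else 1)) := by
        gcongr with i
        exact hcol i
    _ = Fintype.card α ^ Fintype.card ι * Real.exp (-(#S * β ^ 2 / (2 * q))) := by
        rw [prod_mul_distrib, prod_const, prod_ite_mem, univ_inter, prod_const, card_univ,
          ← Real.exp_nat_mul, mul_left_comm, ← Real.exp_add, ht]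
        congr 2
        field_simp
        ring

theorem AddMonoidHom.card_le_card_mul_card_fiber_s13 {G H : Type*} [AddGroup G] [AddGroup H]
    [Fintype G] [Fintype H] [DecidableEq H] (φ : G →+ H) {w : H} (hw : w ∈ φ.range) :
    Fintype.card G ≤ Fintype.card H * #{g | φ g = w} := by
  obtain ⟨u, rfl⟩ := hw
  -- every nonempty fibre is a translate of the fibre over `φ u`
  have hfiber : ∀ h : H, #{g | φ g = h} ≤ #{g | φ g = φ u} := by
    intro h
    obtain he | ⟨g₀, hg₀⟩ := (filter (fun g => φ g = h) univ).eq_empty_or_nonempty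
    · simp [he]
    refine card_le_card_of_injOn (· + (-g₀ + u)) (fun g hg => ?_) (add_left_injective _).injOn
    simp only [coe_filter, mem_filter, mem_univ, true_and, Set.mem_ofPred_eq] at hg hg₀ ⊢
    rw [map_add, map_add, map_neg, hg, hg₀, add_neg_cancel_left]
  calc Fintype.card G = ∑ h : H, #{g | φ g = h} :=
        card_eq_sum_card_fiberwise fun _ _ => mem_univ _
    _ ≤ ∑ _h : H, #{g | φ g = φ u} := sum_le_sum fun h _ => hfiber h
    _ = Fintype.card H * #{g | φ g = φ u} := by rw [sum_const, card_univ, smul_eq_mul]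

theorem Matrix.exists_dotProduct_ne_zero {ι R : Type*} [Fintype ι] [DecidableEq ι]
    [NonAssocSemiring R] {t : ι → R} (ht : t ≠ 0) : ∃ u, t ⬝ᵥ u ≠ 0 := by
  obtain ⟨j, hj⟩ := Function.ne_iff.mp ht
  exact ⟨Pi.single j 1, by simpa [dotProduct_single] using hj⟩

theorem Matrix.exists_dotProduct_ne_zero_and_ne_zero {ι R : Type*} [Fintype ι] [DecidableEq ι]
    [NonAssocSemiring R] {t₁ t₂ : ι → R} (ht₁ : t₁ ≠ 0) (ht₂ : t₂ ≠ 0) :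
    ∃ u, t₁ ⬝ᵥ u ≠ 0 ∧ t₂ ⬝ᵥ u ≠ 0 := by
  obtain ⟨a, ha⟩ := exists_dotProduct_ne_zero ht₁
  obtain ⟨b, hb⟩ := exists_dotProduct_ne_zero ht₂
  by_cases h₂a : t₂ ⬝ᵥ a = 0
  · by_cases h₁b : t₁ ⬝ᵥ b = 0
    · exact ⟨a + b, by simpa [dotProduct_add, h₁b], by simpa [dotProduct_add, h₂a]⟩
    · exact ⟨b, h₁b, hb⟩
  · exact ⟨a, ha, h₂a⟩

theorem card_le_four_mul_card_dotProduct_eq_one {ι : Type*} [Fintype ι] [DecidableEq ι]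
    {t₁ t₂ : ι → ZMod 2} (ht₁ : t₁ ≠ 0) (ht₂ : t₂ ≠ 0) :
    Fintype.card (ι → ZMod 2) ≤ 4 * #{c | t₁ ⬝ᵥ c = 1 ∧ t₂ ⬝ᵥ c = 1} := by
  let φ : (ι → ZMod 2) →+ ZMod 2 × ZMod 2 :=
    { toFun := fun c => (t₁ ⬝ᵥ c, t₂ ⬝ᵥ c)
      map_zero' := by simp
      map_add' := by simp [dotProduct_add] }
  have hone : ∀ x : ZMod 2, x ≠ 0 → x = 1 := by decide
  obtain ⟨u, hu₁, hu₂⟩ := exists_dotProduct_ne_zero_and_ne_zero ht₁ ht₂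
  have h := φ.card_le_card_mul_card_fiber_s13 (w := (1, 1)) ⟨u, by simp [φ, hone _ hu₁, hone _ hu₂]⟩
  simpa [φ] using h

theorem Finset.card_le_card_mul_of_subset_biUnion {ι α : Type*} [DecidableEq α] {s : Finset ι}
    {t : ι → Finset α} {u : Finset α} (h : u ⊆ s.biUnion t) {K : ℝ}
    (hK : ∀ i ∈ s, (#(t i) : ℝ) ≤ K) : (#u : ℝ) ≤ #s * K :=
  calc (#u : ℝ) ≤ #(s.biUnion t) := by exact_mod_cast card_le_card h
    _ ≤ ∑ i ∈ s, (#(t i) : ℝ) := by exact_mod_cast card_biUnion_le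
    _ ≤ #s * K := by simpa using sum_le_card_nsmul s _ K hK

section Code

variable {κ ι : Type*} [Fintype κ] [Fintype ι]

/-- `|f ⊙ v|` -/
def schurWeight (f v : ι → ZMod 2) : ℕ := #{i | f i * v i = 1}

theorem schurWeight_mul_add_le (f₁ f₂ v₁ v₂ s : ι → ZMod 2) :
    schurWeight (f₁ * f₂) (v₁ + v₂) ≤ schurWeight f₁ (v₁ + s) + schurWeight f₂ (v₂ + s) := by
  classical
  refine (card_le_card fun i hi => ?_).trans (card_union_le _ _)
  have key : ∀ a b x y z : ZMod 2, a * b * (x + y) = 1 → a * (x + z) = 1 ∨ b * (y + z) = 1 := by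
    decide
  simpa using key _ _ _ _ (s i) (by simpa using hi)

theorem le_card_sum_eq_one_of_mem_powersetCard {C : Finset (ι → ZMod 2)} {d : ℕ}
    (hdist : ∀ c ∈ C, ∀ c' ∈ C, c ≠ c' → d ≤ hammingDist c c') {x : Finset (ι → ZMod 2)}
    (hx : x ∈ C.powersetCard 2) : d ≤ #{i | (∑ c ∈ x, c) i = 1} := by
  classical
  obtain ⟨hxC, hx2⟩ := mem_powersetCard.1 hx
  obtain ⟨a, b, hab, rfl⟩ := card_eq_two.1 hx2
  have hne : ∀ y z : ZMod 2, y ≠ z ↔ y + z = 1 := by decide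
  rw [sum_pair hab]
  refine (hdist a (hxC (by simp)) b (hxC (by simp)) hab).trans_eq ?_
  simp only [hammingDist, hne, Pi.add_apply]

def AtMostOneCloseCodeword (C : Finset (ι → ZMod 2)) (F : Matrix κ ι (ZMod 2)) (r : ℝ) : Prop :=
  ∀ s : ι → ZMod 2, ∀ c₁ ∈ C, ∀ c₂ ∈ C,
    (∃ t : κ → ZMod 2, t ᵥ* F ≠ 0 ∧ (schurWeight (t ᵥ* F) (c₁ + s) : ℝ) < r) →
    (∃ t : κ → ZMod 2, t ᵥ* F ≠ 0 ∧ (schurWeight (t ᵥ* F) (c₂ + s) : ℝ) < r) →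
    c₁ = c₂

theorem exists_schurWeight_lt_of_not_atMostOneCloseCodeword {C : Finset (ι → ZMod 2)}
    {F : Matrix κ ι (ZMod 2)} {r : ℝ} (h : ¬ AtMostOneCloseCodeword C F r) :
    ∃ x ∈ C.powersetCard 2, ∃ t₁ t₂ : κ → ZMod 2, t₁ ≠ 0 ∧ t₂ ≠ 0 ∧
      (schurWeight (t₁ ᵥ* F * t₂ ᵥ* F) (∑ c ∈ x, c) : ℝ) < 2 * r := by
  simp only [AtMostOneCloseCodeword, not_forall] at h
  obtain ⟨s, c₁, hc₁, c₂, hc₂, ⟨t₁, hF₁, hw₁⟩, ⟨t₂, hF₂, hw₂⟩, hne⟩ := h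
  refine ⟨{c₁, c₂}, mem_powersetCard.2 ⟨?_, card_pair hne⟩, t₁, t₂,
    fun h => hF₁ (by rw [h, zero_vecMul]), fun h => hF₂ (by rw [h, zero_vecMul]), ?_⟩
  · exact insert_subset hc₁ (singleton_subset_iff.2 hc₂)
  · rw [sum_pair hne]
    have := schurWeight_mul_add_le (t₁ ᵥ* F) (t₂ ᵥ* F) c₁ c₂ s
    have : (schurWeight (t₁ ᵥ* F * t₂ ᵥ* F) (c₁ + c₂) : ℝ) ≤
        schurWeight (t₁ ᵥ* F) (c₁ + s) + schurWeight (t₂ ᵥ* F) (c₂ + s) := by exact_mod_cast this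
    linarith

variable [DecidableEq κ] [DecidableEq ι]

theorem card_schurWeight_lt_le {t₁ t₂ : κ → ZMod 2} (ht₁ : t₁ ≠ 0) (ht₂ : t₂ ≠ 0)
    {v : ι → ZMod 2} {d : ℕ} (hd : d ≤ #{i | v i = 1}) {β : ℝ} (hβ0 : 0 ≤ β) (hβ : β ≤ 1 / 4) :
    (#{F : Matrix κ ι (ZMod 2) | (schurWeight (t₁ ᵥ* F * t₂ ᵥ* F) v : ℝ) < (1 / 4 - β) * d} : ℝ)
      ≤ 2 ^ (Fintype.card κ * Fintype.card ι) * Real.exp (-(2 * d * β ^ 2)) := by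
  set S : Finset ι := {i | v i = 1}
  have hS : (d : ℝ) ≤ #S := by exact_mod_cast hd
  have hweight : ∀ F : Matrix κ ι (ZMod 2), schurWeight (t₁ ᵥ* F * t₂ ᵥ* F) v =
      #{i ∈ S | t₁ ⬝ᵥ Fᵀ i = 1 ∧ t₂ ⬝ᵥ Fᵀ i = 1} := by
    have key : ∀ a b c : ZMod 2, a * b * c = 1 ↔ c = 1 ∧ a = 1 ∧ b = 1 := by decide
    intro F
    simp only [schurWeight, S, filter_filter, Pi.mul_apply, key]
    rfl
  have hquarter : (1 / 4 : ℝ) * Fintype.card (κ → ZMod 2) ≤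
      #{c : κ → ZMod 2 | t₁ ⬝ᵥ c = 1 ∧ t₂ ⬝ᵥ c = 1} := by
    have := card_le_four_mul_card_dotProduct_eq_one ht₁ ht₂
    rw [one_div_mul_eq_div, div_le_iff₀ (by norm_num)]
    exact_mod_cast this.trans_eq (mul_comm _ _)
  calc (#{F : Matrix κ ι (ZMod 2) | (schurWeight (t₁ ᵥ* F * t₂ ᵥ* F) v : ℝ) < (1 / 4 - β) * d} : ℝ)
      ≤ #{g : ι → κ → ZMod 2 |
          (#{i ∈ S | t₁ ⬝ᵥ g i = 1 ∧ t₂ ⬝ᵥ g i = 1} : ℝ) < (1 / 4 - β) * #S} := by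
        gcongr
        refine card_le_card_of_injOn transpose (fun F hF => ?_) transpose_injective.injOn
        simp only [coe_filter, mem_univ, true_and, Set.mem_ofPred_eq, hweight] at hF ⊢
        exact hF.trans_le (by gcongr)
    _ ≤ Fintype.card (κ → ZMod 2) ^ Fintype.card ι * Real.exp (-(#S * β ^ 2 / (2 * (1 / 4)))) :=
        chernoff_card_filter_lt_le (fun c => t₁ ⬝ᵥ c = 1 ∧ t₂ ⬝ᵥ c = 1) S (by norm_num) hβ0
          hquarter
    _ ≤ 2 ^ (Fintype.card κ * Fintype.card ι) * Real.exp (-(2 * d * β ^ 2)) := by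
        rw [Fintype.card_fun, ZMod.card, pow_mul, show (#S : ℝ) * β ^ 2 / (2 * (1 / 4)) =
          2 * #S * β ^ 2 by ring]
        push_cast
        gcongr

theorem card_not_atMostOneCloseCodeword_le (C : Finset (ι → ZMod 2)) {d : ℕ}
    (hdist : ∀ c ∈ C, ∀ c' ∈ C, c ≠ c' → d ≤ hammingDist c c') {β : ℝ} (hβ0 : 0 ≤ β)
    (hβ : β ≤ 1 / 4) :
    (Nat.card {F : Matrix κ ι (ZMod 2) //
        ¬ AtMostOneCloseCodeword C F ((1 / 2) * (1 / 4 - β) * d)} : ℝ) ≤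
      (#C).choose 2 * 2 ^ (2 * Fintype.card κ) *
        (2 ^ (Fintype.card κ * Fintype.card ι) * Real.exp (-(2 * d * β ^ 2))) := by
  classical
  set T : Finset (κ → ZMod 2) := {t | t ≠ 0}
  set E : Finset (ι → ZMod 2) × (κ → ZMod 2) × (κ → ZMod 2) → Finset (Matrix κ ι (ZMod 2)) :=
    fun p => {F | (schurWeight (p.2.1 ᵥ* F * p.2.2 ᵥ* F) (∑ c ∈ p.1, c) : ℝ) < (1 / 4 - β) * d}
  have hbad : ({F | ¬ AtMostOneCloseCodeword C F ((1 / 2) * (1 / 4 - β) * d)} :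
      Finset (Matrix κ ι (ZMod 2))) ⊆
      (C.powersetCard 2 ×ˢ T ×ˢ T).biUnion E := by
    intro F hF
    obtain ⟨x, hx, t₁, t₂, ht₁, ht₂, hw⟩ :=
      exists_schurWeight_lt_of_not_atMostOneCloseCodeword (mem_filter.1 hF).2
    refine mem_biUnion.2 ⟨(x, t₁, t₂), by simp [T, hx, ht₁, ht₂], mem_filter.2 ⟨mem_univ _, ?_⟩⟩
    exact hw.trans_eq (by ring)
  have hE : ∀ p ∈ C.powersetCard 2 ×ˢ T ×ˢ T, (#(E p) : ℝ) ≤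
      2 ^ (Fintype.card κ * Fintype.card ι) * Real.exp (-(2 * d * β ^ 2)) := by
    intro p hp
    simp only [mem_product, T, mem_filter, mem_univ, true_and] at hp
    exact card_schurWeight_lt_le hp.2.1 hp.2.2
      (le_card_sum_eq_one_of_mem_powersetCard hdist hp.1) hβ0 hβ
  have hT : #T ≤ 2 ^ Fintype.card κ := by
    simpa using card_filter_le (univ : Finset (κ → ZMod 2)) (· ≠ 0)
  rw [Nat.card_eq_fintype_card, Fintype.card_subtype]
  refine (card_le_card_mul_of_subset_biUnion hbad hE).trans ?_
  gcongr
  rw [card_product, card_product, card_powersetCard, two_mul, pow_add]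
  push_cast
  gcongr <;> exact_mod_cast hT

end Code

theorem stmt13_general (n l m d : ℕ)
    (C : Finset (Fin n → ZMod 2)) (hcard : C.card = m)
    (hdist : ∀ c ∈ C, ∀ c' ∈ C, c ≠ c' → d ≤ hammingDist c c')
    (β : ℝ) (hβ0 : 0 < β) (hβ : β < 1 / 4) :
    (Nat.card {F : Matrix (Fin l) (Fin n) (ZMod 2) //
        ¬ ∀ s : Fin n → ZMod 2, ∀ c₁ ∈ C, ∀ c₂ ∈ C,
            (∃ t : Fin l → ZMod 2, Matrix.vecMul t F ≠ 0 ∧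
              ((Finset.univ.filter (fun i =>
                  Matrix.vecMul t F i * (c₁ i + s i) = 1)).card : ℝ) <
                (1 / 2) * (1 / 4 - β) * d) →
            (∃ t : Fin l → ZMod 2, Matrix.vecMul t F ≠ 0 ∧
              ((Finset.univ.filter (fun i =>
                  Matrix.vecMul t F i * (c₂ i + s i) = 1)).card : ℝ) <
                (1 / 2) * (1 / 4 - β) * d) →
            c₁ = c₂} : ℝ)
      / 2 ^ (l * n)
    ≤ (m.choose 2 : ℝ) * 2 ^ (2 * l) * Real.exp (-(2 * d * β ^ 2)) := by
  have h := card_not_atMostOneCloseCodeword_le (κ := Fin l) C hdist hβ0.le hβ.le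
  rw [Fintype.card_fin, Fintype.card_fin, hcard] at h
  rw [div_le_iff₀ (by positivity)]
  exact h.trans_eq (by ring)

/-- Corollary 13: let `C ⊆ {0,1}ⁿ` be a code of size `m` and minimum distance `d`,
and let `F` be a uniformly random `ℓ×n` matrix over 𝔽₂. Except with probability at
most `(m choose 2)·2^{2ℓ}·exp(−2dβ²)`, the matrix `F` is such that for every
`s ∈ {0,1}ⁿ` there is at most one codeword `c̃` admitting a nonzero `f` in the row
span of `F` with `|f ⊙ (c̃ ⊕ s)| < (1/2)(1/4 − β)d` (equivalently: all other
codewords `c ≠ c̃` satisfy `|f ⊙ (c ⊕ s)| ≥ (1/2)(1/4 − β)d` for all such `f`).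
The probability is expressed as (number of bad matrices) / 2^{ℓn}. -/
theorem stmt13 (n l m d : ℕ) (hn : 0 < n) (hl : 0 < l)
    (C : Finset (Fin n → ZMod 2)) (hcard : C.card = m)
    (hdist : ∀ c ∈ C, ∀ c' ∈ C, c ≠ c' → d ≤ hammingDist c c')
    (β : ℝ) (hβ0 : 0 < β) (hβ : β < 1 / 4) :
    (Nat.card {F : Matrix (Fin l) (Fin n) (ZMod 2) //
        ¬ ∀ s : Fin n → ZMod 2, ∀ c₁ ∈ C, ∀ c₂ ∈ C,
            (∃ t : Fin l → ZMod 2, Matrix.vecMul t F ≠ 0 ∧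
              ((Finset.univ.filter (fun i =>
                  Matrix.vecMul t F i * (c₁ i + s i) = 1)).card : ℝ) <
                (1 / 2) * (1 / 4 - β) * d) →
            (∃ t : Fin l → ZMod 2, Matrix.vecMul t F ≠ 0 ∧
              ((Finset.univ.filter (fun i =>
                  Matrix.vecMul t F i * (c₂ i + s i) = 1)).card : ℝ) <
                (1 / 2) * (1 / 4 - β) * d) →
            c₁ = c₂} : ℝ)
      / 2 ^ (l * n)
    ≤ (m.choose 2 : ℝ) * 2 ^ (2 * l) * Real.exp (-(2 * d * β ^ 2)) :=
  stmt13_general n l m d C hcard hdist β hβ0 hβ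
end

section
/- Let 𝒳 and 𝒴 be finite sets, let P_{XY} be a probability distribution on 𝒳 × 𝒴, and for each (x,y) with P_{XY}(x,y) > 0 let ρ_E^{x,y} be a density matrix on ℂ^d. Define, for each x, the density matrix ρ_{YE}^x := Σ_y P_{Y|X}(y|x) · |y⟩⟨y| ⊗ ρ_E^{x,y} on ℂ^{|𝒴|} ⊗ ℂ^d, where {|y⟩}_{y∈𝒴} is the standard basis of ℂ^{|𝒴|}. Then p_guess(X|YE) = Σ_y P_Y(y) · p_guess(X|E, Y=y), where p_guess(X|YE) := sup over POVMs {M_x}_{x∈𝒳} on ℂ^{|𝒴|} ⊗ ℂ^d of Σ_x P_X(x)·tr(M_x ρ_{YE}^x), and p_guess(X|E, Y=y) := sup over POVMs {N_x}_{x∈𝒳} on ℂ^d of Σ_x P_{X|Y}(x|y)·tr(N_x ρ_E^{x,y}). -/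
/-!
The cq-state `ρ_{YE}^x` is block diagonal with respect to the classical register, so
`tr(M_x ρ_{YE}^x)` only sees the diagonal blocks `M_x^{(y)}` of a POVM `M`. For each `y` these
blocks form a POVM on `ℂ^d`, and conversely any family of POVMs `N^{(y)}` is realised by the
block-diagonal POVM `∑_y |y⟩⟨y| ⊗ N^{(y)}`. Hence the achievable success probabilities form the
Minkowski sum over `y` of the per-`y` ones, and the supremum of a finite Minkowski sum of bounded
sets of reals is the sum of the suprema; the weight `P_Y(y)` comes out by rescaling.
-/

open scoped ComplexOrder Kronecker

/-- The cq-state `ρ_{YE}^x = ∑_y P_{Y|X}(y|x) |y⟩⟨y| ⊗ ρ_E^{x,y}` on `ℂ^|𝒴| ⊗ ℂ^d`. -/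
noncomputable def rhoYE {𝒳 𝒴 : Type*} [Fintype 𝒳] [Fintype 𝒴] [DecidableEq 𝒴] {d : ℕ}
    (P : 𝒳 → 𝒴 → ℝ) (ρ : 𝒳 → 𝒴 → Matrix (Fin d) (Fin d) ℂ) (x : 𝒳) :
    Matrix (𝒴 × Fin d) (𝒴 × Fin d) ℂ :=
  ∑ y, ((P x y / ∑ y', P x y' : ℝ) : ℂ) • (Matrix.single y y (1 : ℂ) ⊗ₖ ρ x y)

open scoped Pointwise
open Matrix

theorem csSup_finsetSum {ι M : Type*} [ConditionallyCompleteLattice M] [AddCommGroup M]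
    [AddLeftMono M] (s : Finset ι) (S : ι → Set M) (hne : ∀ i ∈ s, (S i).Nonempty)
    (hbdd : ∀ i ∈ s, BddAbove (S i)) : sSup (∑ i ∈ s, S i) = ∑ i ∈ s, sSup (S i) := by
  classical
  induction s using Finset.induction_on with
  | empty => simp
  | insert i s hi ih =>
    have hne' : (∑ j ∈ s, S j).Nonempty :=
      Finset.sum_induction _ _ (fun _ _ => .add) Set.zero_nonempty
        fun j hj => hne j (Finset.mem_insert_of_mem hj)
    have hbdd' : BddAbove (∑ j ∈ s, S j) :=
      Finset.sum_induction _ _ (fun _ _ => .add) bddAbove_singleton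
        fun j hj => hbdd j (Finset.mem_insert_of_mem hj)
    rw [Finset.sum_insert hi, Finset.sum_insert hi,
      csSup_add (hne i (s.mem_insert_self i)) (hbdd i (s.mem_insert_self i)) hne' hbdd',
      ih (fun j hj => hne j (Finset.mem_insert_of_mem hj))
        (fun j hj => hbdd j (Finset.mem_insert_of_mem hj))]

namespace Matrix

theorem sum_kronecker {ι l m p q α : Type*} [CommSemiring α] (s : Finset ι)
    (A : ι → Matrix l m α) (B : Matrix p q α) : (∑ i ∈ s, A i) ⊗ₖ B = ∑ i ∈ s, A i ⊗ₖ B :=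
  map_sum ((kroneckerBilinear (R := α)).flip B) A s

theorem kronecker_sum {ι l m p q α : Type*} [CommSemiring α] (s : Finset ι)
    (A : Matrix l m α) (B : ι → Matrix p q α) : A ⊗ₖ (∑ i ∈ s, B i) = ∑ i ∈ s, A ⊗ₖ B i :=
  map_sum (kroneckerBilinear (R := α) A) B s

section Blocks

variable {𝒴 n α : Type*} [Fintype 𝒴] [DecidableEq 𝒴]

theorem trace_mul_single_kronecker [Fintype n] [CommSemiring α]
    (M : Matrix (𝒴 × n) (𝒴 × n) α) (y : 𝒴) (A : Matrix n n α) :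
    (M * (single y y 1 ⊗ₖ A)).trace = (M.submatrix (Prod.mk y) (Prod.mk y) * A).trace := by
  simp [trace, mul_apply, kroneckerMap_apply, single_apply, Fintype.sum_prod_type, ite_and]

theorem submatrix_sum_single_kronecker [Semiring α] (A : 𝒴 → Matrix n n α) (y : 𝒴) :
    (∑ y', single y' y' 1 ⊗ₖ A y').submatrix (Prod.mk y) (Prod.mk y) = A y := by
  ext i j
  simp [Matrix.sum_apply, kroneckerMap_apply, single_apply]

end Blocks

variable {n : Type*} [Fintype n] [DecidableEq n]

open scoped MatrixOrder in
theorem PosSemidef.trace_mul_nonneg {A B : Matrix n n ℂ} (hA : A.PosSemidef)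
    (hB : B.PosSemidef) : 0 ≤ (A * B).trace := by
  obtain ⟨C, rfl⟩ := CStarAlgebra.nonneg_iff_eq_star_mul_self.mp hA.nonneg
  rw [mul_assoc, trace_mul_comm, star_eq_conjTranspose]
  exact (hB.mul_mul_conjTranspose_same C).trace_nonneg

theorem re_trace_mul_le_of_posSemidef_sub {A B σ : Matrix n n ℂ} (hAB : (B - A).PosSemidef)
    (hσ : σ.PosSemidef) : (A * σ).trace.re ≤ (B * σ).trace.re := by
  have h := hAB.trace_mul_nonneg hσ
  rw [sub_mul, trace_sub, sub_nonneg] at h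
  exact Complex.re_le_re h

end Matrix

section POVM

variable {𝒳 n : Type*} [Fintype 𝒳] [DecidableEq n]

theorem posSemidef_one_sub_of_sum_eq_one {𝕜 : Type*} [RCLike 𝕜] {M : 𝒳 → Matrix n n 𝕜}
    (hM : ∀ x, (M x).PosSemidef) (hsum : ∑ x, M x = 1) (x : 𝒳) : (1 - M x).PosSemidef := by
  classical
  rw [← hsum, ← Finset.sum_erase_eq_sub (Finset.mem_univ x)]
  exact Finset.sum_induction _ _ (fun _ _ => .add) .zero fun x' _ => hM x'

variable [Fintype n]

/-- `sSup (guessValues Q σ)` is the guessing probability of the (unnormalised) ensemble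
`{Q x, σ x}`. -/
def guessValues (Q : 𝒳 → ℝ) (σ : 𝒳 → Matrix n n ℂ) : Set ℝ :=
  {r : ℝ | ∃ N : 𝒳 → Matrix n n ℂ, (∀ x, (N x).PosSemidef) ∧ (∑ x, N x = 1) ∧
    r = ∑ x, Q x * (Matrix.trace (N x * σ x)).re}

theorem guessValues_nonempty [Nonempty 𝒳] (Q : 𝒳 → ℝ) (σ : 𝒳 → Matrix n n ℂ) :
    (guessValues Q σ).Nonempty := by
  classical
  obtain ⟨x₀⟩ := ‹Nonempty 𝒳›
  refine ⟨_, Pi.single x₀ 1, fun x => ?_, by simp [Finset.sum_pi_single'], rfl⟩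
  rcases eq_or_ne x x₀ with rfl | hx
  · simpa using PosSemidef.one
  · simpa [hx] using PosSemidef.zero

theorem bddAbove_guessValues {Q : 𝒳 → ℝ} {σ : 𝒳 → Matrix n n ℂ} (hQ : ∀ x, 0 ≤ Q x)
    (hσ : ∀ x, 0 < Q x → (σ x).PosSemidef ∧ (σ x).trace = 1) :
    BddAbove (guessValues Q σ) := by
  refine ⟨∑ x, Q x, ?_⟩
  rintro r ⟨N, hN, hsum, rfl⟩
  refine Finset.sum_le_sum fun x _ => ?_
  rcases (hQ x).eq_or_lt with hx | hx
  · simp [← hx]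
  · obtain ⟨hσx, htr⟩ := hσ x hx
    have h := re_trace_mul_le_of_posSemidef_sub (posSemidef_one_sub_of_sum_eq_one hN hsum x) hσx
    rw [one_mul, htr] at h
    simpa using mul_le_mul_of_nonneg_left h (hQ x)

theorem smul_guessValues (c : ℝ) (Q : 𝒳 → ℝ) (σ : 𝒳 → Matrix n n ℂ) :
    c • guessValues Q σ = guessValues (fun x => c * Q x) σ := by
  ext r
  simp only [guessValues, Set.mem_smul_set, Set.mem_ofPred_eq, smul_eq_mul]
  constructor
  · rintro ⟨_, ⟨N, hN, hsum, rfl⟩, rfl⟩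
    exact ⟨N, hN, hsum, by simp only [Finset.mul_sum, mul_assoc]⟩
  · rintro ⟨N, hN, hsum, rfl⟩
    exact ⟨_, ⟨N, hN, hsum, rfl⟩, by simp only [Finset.mul_sum, mul_assoc]⟩

variable {𝒴 : Type*} [Fintype 𝒴] [DecidableEq 𝒴]

theorem setOf_povm_diagonal_blocks_eq_sum (g : 𝒴 → (𝒳 → Matrix n n ℂ) → ℝ) :
    {r : ℝ | ∃ M : 𝒳 → Matrix (𝒴 × n) (𝒴 × n) ℂ, (∀ x, (M x).PosSemidef) ∧ (∑ x, M x = 1) ∧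
      r = ∑ y, g y (fun x => (M x).submatrix (Prod.mk y) (Prod.mk y))}
    = ∑ y, {r : ℝ | ∃ N : 𝒳 → Matrix n n ℂ, (∀ x, (N x).PosSemidef) ∧ (∑ x, N x = 1) ∧
      r = g y N} := by
  ext r
  rw [Set.mem_fintype_sum]
  constructor
  · rintro ⟨M, hM, hsum, rfl⟩
    refine ⟨_, fun y => ⟨_, fun x => (hM x).submatrix _, ?_, rfl⟩, rfl⟩
    have hblock : ∑ x, (M x).submatrix (Prod.mk y) (Prod.mk y)
        = (∑ x, M x).submatrix (Prod.mk y) (Prod.mk y) := by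
      ext i j
      simp [Matrix.sum_apply]
    rw [hblock, hsum, submatrix_one _ (Prod.mk_right_injective y)]
  · rintro ⟨s, hs, rfl⟩
    choose N hN hsum hs using hs
    refine ⟨fun x => ∑ y, single y y 1 ⊗ₖ N y x, fun x => ?_, ?_, ?_⟩
    · refine Finset.sum_induction _ _ (fun _ _ => .add) .zero fun y _ => ?_
      rw [← diagonal_single]
      exact (PosSemidef.diagonal (Pi.single_nonneg.mpr zero_le_one)).kronecker (hN y x)
    · simp_rw [Finset.sum_comm (γ := 𝒳), ← kronecker_sum, hsum, ← sum_kronecker, sum_single_one,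
        one_kronecker_one]
    · simp_rw [submatrix_sum_single_kronecker, hs]

end POVM

section GuessingProbability

variable {𝒳 𝒴 : Type*} [Fintype 𝒳] [Fintype 𝒴] [DecidableEq 𝒴] {d : ℕ}

theorem sum_mul_re_trace_mul_rhoYE {P : 𝒳 → 𝒴 → ℝ} (hP : ∀ x y, 0 ≤ P x y)
    (ρ : 𝒳 → 𝒴 → Matrix (Fin d) (Fin d) ℂ) (x : 𝒳) (M : Matrix (𝒴 × Fin d) (𝒴 × Fin d) ℂ) :
    (∑ y, P x y) * (M * rhoYE P ρ x).trace.re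
      = ∑ y, P x y * (M.submatrix (Prod.mk y) (Prod.mk y) * ρ x y).trace.re := by
  simp only [rhoYE, Matrix.mul_smul, trace_sum, trace_smul,
    trace_mul_single_kronecker, Complex.re_sum, smul_eq_mul, Complex.re_ofReal_mul,
    Finset.mul_sum, ← mul_assoc]
  refine Finset.sum_congr rfl fun y _ => congrArg (· * _) (mul_div_cancel_of_imp' fun h => ?_)
  exact (Finset.sum_eq_zero_iff_of_nonneg fun y' _ => hP x y').mp h y (Finset.mem_univ y)

theorem guessValues_rhoYE {P : 𝒳 → 𝒴 → ℝ} (hP : ∀ x y, 0 ≤ P x y)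
    (ρ : 𝒳 → 𝒴 → Matrix (Fin d) (Fin d) ℂ) :
    guessValues (fun x => ∑ y, P x y) (rhoYE P ρ)
      = ∑ y, guessValues (fun x => P x y) (fun x => ρ x y) := by
  refine Eq.trans ?_
    (setOf_povm_diagonal_blocks_eq_sum fun y N => ∑ x, P x y * (N x * ρ x y).trace.re)
  refine Set.ext fun r => exists_congr fun M => and_congr_right fun _ => and_congr_right fun _ => ?_
  simp only [sum_mul_re_trace_mul_rhoYE hP]
  rw [Finset.sum_comm]

end GuessingProbability

/-- Averaging property of the guessing probability with quantum side information:
`p_guess(X|YE) = ∑_y P_Y(y)·p_guess(X|E, Y=y)`, where the guessing probabilities are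
suprema over POVMs. -/
theorem stmt14 {𝒳 𝒴 : Type*} [Fintype 𝒳] [Fintype 𝒴] [DecidableEq 𝒴] {d : ℕ}
    (P : 𝒳 → 𝒴 → ℝ) (hP : ∀ x y, 0 ≤ P x y) (hsum : ∑ x, ∑ y, P x y = 1)
    (ρ : 𝒳 → 𝒴 → Matrix (Fin d) (Fin d) ℂ)
    (hρ : ∀ x y, 0 < P x y → (ρ x y).PosSemidef ∧ (ρ x y).trace = 1) :
    sSup {r : ℝ | ∃ M : 𝒳 → Matrix (𝒴 × Fin d) (𝒴 × Fin d) ℂ,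
        (∀ x, (M x).PosSemidef) ∧ (∑ x, M x = 1) ∧
        r = ∑ x, (∑ y, P x y) * (Matrix.trace (M x * rhoYE P ρ x)).re}
    = ∑ y, (∑ x, P x y) *
        sSup {r : ℝ | ∃ N : 𝒳 → Matrix (Fin d) (Fin d) ℂ,
          (∀ x, (N x).PosSemidef) ∧ (∑ x, N x = 1) ∧
          r = ∑ x, (P x y / ∑ x', P x' y) * (Matrix.trace (N x * ρ x y)).re} := by
  have : Nonempty 𝒳 := by
    by_contra h
    simp [not_nonempty_iff.mp h] at hsum
  change sSup (guessValues _ _) = ∑ y, _ * sSup (guessValues _ _)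
  rw [guessValues_rhoYE hP, csSup_finsetSum _ _ (fun y _ => guessValues_nonempty _ _)
    (fun y _ => bddAbove_guessValues (fun x => hP x y) (fun x => hρ x y))]
  refine Finset.sum_congr rfl fun y _ => ?_
  have hPy : ∀ x, ∑ x', P x' y = 0 → P x y = 0 := fun x h =>
    (Finset.sum_eq_zero_iff_of_nonneg fun x' _ => hP x' y).mp h x (Finset.mem_univ x)
  rw [← smul_eq_mul, ← Real.sSup_smul_of_nonneg (Finset.sum_nonneg fun x _ => hP x y),
    smul_guessValues]
  simp only [mul_div_cancel_of_imp' (hPy _)]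
end
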